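/- arXiv:math/9502212 — 10 statements merged into one kernel-verified Lean document; each statement's English description precedes it below -/
import Mathlib

section
/- Let m ≥ n be positive integers with d = gcd(m, n). For any integer r divisible by d with 0 ≤ r ≤ m·n, the number of integer solutions (x, y) of n·x − m·y = r satisfying 0 ≤ x ≤ m and 0 ≤ y ≤ n equals d + 1 − ⌈(p + a)·d/m⌉, where p = ⌊r/n⌋ and a is the unique element of {0, 1, …, m/d − 1} with a·(n/d) ≡ (r − n·p)/d (mod m/d). -/
set_option maxHeartbeats 1000000

theorem stmt_4 (m n r : ℤ) (hm : 0 < m) (hn : 0 < n) (hmn : n ≤ m)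
    (d : ℤ) (hd : d = Int.gcd m n)
    (hdr : d ∣ r) (hr0 : 0 ≤ r) (hr1 : r ≤ m * n)
    (p : ℤ) (hp : p = r / n)
    (a : ℤ) (ha0 : 0 ≤ a) (ha1 : a < m / d)
    (ha : a * (n / d) ≡ (r - n * p) / d [ZMOD m / d]) :
    (((Finset.Icc (0:ℤ) m ×ˢ Finset.Icc (0:ℤ) n).filter
      (fun q => n * q.1 - m * q.2 = r)).card : ℤ)
      = d + 1 - ⌈((p + a : ℚ) * d / m)⌉ := by
  have hd0 : 0 < d := by
    rw [hd]
    exact_mod_cast Nat.pos_of_ne_zero (fun h => by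
      rw [Int.gcd_eq_zero_iff] at h; omega)
  have hdm : d ∣ m := hd ▸ Int.gcd_dvd_left m n
  have hdn : d ∣ n := hd ▸ Int.gcd_dvd_right m n
  have hcop0 : Int.gcd (m / d) (n / d) = 1 := by
    rw [hd]
    exact Int.gcd_div_gcd_div_gcd (by
      have := hd0; rw [hd] at this; exact_mod_cast this)
  obtain ⟨M, hdM⟩ := hdm
  obtain ⟨N, hdN⟩ := hdn
  have hMdef : m / d = M := by rw [hdM]; exact Int.mul_ediv_cancel_left _ hd0.ne'
  have hNdef : n / d = N := by rw [hdN]; exact Int.mul_ediv_cancel_left _ hd0.ne'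
  rw [hMdef, hNdef] at ha
  rw [hMdef] at ha1
  rw [hMdef, hNdef] at hcop0
  have hM0 : 0 < M := by nlinarith
  have hN0 : 0 < N := by nlinarith
  have hNM : N ≤ M := by nlinarith
  have hp0 : 0 ≤ p := hp ▸ Int.ediv_nonneg hr0 hn.le
  have hpm : p ≤ m := by
    rw [hp]
    calc r / n ≤ m * n / n := Int.ediv_le_ediv hn hr1
    _ = m := Int.mul_ediv_cancel _ hn.ne'
  have hrnp0 : 0 ≤ r - n * p := by
    rw [hp]; nlinarith [Int.ediv_mul_le r hn.ne']
  have hrnpn : r - n * p < n := by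
    rw [hp]
    have h1 := Int.emod_lt_of_pos r hn
    have h2 : r % n = r - n * (r / n) := Int.emod_def r n
    omega
  have hdnp : d ∣ r - n * p := dvd_sub hdr ((Dvd.intro _ hdN.symm).mul_right p)
  obtain ⟨s, hds⟩ := hdnp
  have hsdef : (r - n * p) / d = s := by
    rw [hds]; exact Int.mul_ediv_cancel_left _ hd0.ne'
  rw [hsdef] at ha
  have hs0 : 0 ≤ s := by nlinarith
  have hsN : s < N := by nlinarith
  obtain ⟨t, ht⟩ := ha.dvd
  have hme : n * (p + a) - r = m * (-t) := by
    rw [hdM, hdN]; linear_combination -hds - d * ht - p * hdN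
  obtain ⟨e, he⟩ : m ∣ n * (p + a) - r := ⟨-t, hme⟩
  have he0 : 0 ≤ e := by
    have h1 : 0 ≤ m * e := by
      rw [← he]
      rcases eq_or_lt_of_le ha0 with h | h
      · have hst : s = M * t := by linear_combination ht - N * h
        have hs0' : s = 0 := by
          rcases lt_trichotomy t 0 with h' | h' | h'
          · have : M * t < 0 := mul_neg_of_pos_of_neg hM0 h'
            linarith
          · rw [hst, h', mul_zero]
          · have : M * 1 ≤ M * t := by
              exact mul_le_mul_of_nonneg_left (by omega) hM0.le
            linarith
        have hr' : r - n * p = 0 := by rw [hds, hs0', mul_zero]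
        nlinarith
      · nlinarith
    nlinarith
  have hnMmN : n * M = m * N := by rw [hdM, hdN]; ring
  have hKle : ∀ k : ℤ, k ≤ (m - p - a) / M ↔ k * M ≤ m - p - a := fun k =>
    Int.le_ediv_iff_mul_le hM0
  have hcop : IsCoprime M N := Int.isCoprime_iff_gcd_eq_one.mpr hcop0
  have hset : ((Finset.Icc (0:ℤ) m ×ˢ Finset.Icc (0:ℤ) n).filter
      (fun q => n * q.1 - m * q.2 = r))
      = (Finset.Icc (0:ℤ) ((m - p - a) / M)).image
          (fun k => (p + a + k * M, e + k * N)) := by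
    ext ⟨x, y⟩
    simp only [Finset.mem_filter, Finset.mem_product, Finset.mem_Icc,
      Finset.mem_image, Prod.mk.injEq]
    constructor
    · rintro ⟨⟨⟨hx0, hxm⟩, hy0, hyn⟩, heq⟩
      have hdvd : M ∣ x - (p + a) := by
        have h1 : m ∣ n * (x - (p + a)) := by
          refine ⟨y + t, ?_⟩
          linear_combination heq - hme
        have h2 : M ∣ N * (x - (p + a)) := by
          obtain ⟨u, hu⟩ := h1
          refine ⟨u, ?_⟩
          have h3 : d * (N * (x - (p + a))) = d * (M * u) := by
            rw [hdM, hdN] at hu; linear_combination hu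
          exact mul_left_cancel₀ hd0.ne' h3
        exact hcop.dvd_of_dvd_mul_left h2
      obtain ⟨k, hk⟩ := hdvd
      refine ⟨k, ⟨?_, ?_⟩, by linarith [hk], ?_⟩
      · have hxp : p ≤ x := by
          have h1 : n * p ≤ n * x := by nlinarith
          exact le_of_mul_le_mul_left h1 hn
        by_contra hneg
        push_neg at hneg
        have hk1 : k ≤ -1 := by omega
        have : M * k ≤ M * (-1) := mul_le_mul_of_nonneg_left (by omega) hM0.le
        linarith
      · rw [hKle]; nlinarith
      · have h4 : m * y = m * (e + k * N) := by
          linear_combination -heq + n * hk + he + k * hnMmN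
        have := mul_left_cancel₀ hm.ne' h4
        omega
    · rintro ⟨k, ⟨hk0, hkK⟩, hxeq, hyeq⟩
      rw [hKle] at hkK
      subst hxeq hyeq
      refine ⟨⟨⟨by positivity, by nlinarith⟩, by positivity, ?_⟩, ?_⟩
      · have h1 : m * (e + k * N) ≤ m * n := by
          have h2 : m * (e + k * N) = n * (p + a + k * M) - r := by
            linear_combination -he - k * hnMmN
          nlinarith
        exact le_of_mul_le_mul_left h1 hm
      · linear_combination he + k * hnMmN
  rw [hset]
  have hinj : Set.InjOn (fun k : ℤ => (p + a + k * M, e + k * N))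
      (Finset.Icc (0:ℤ) ((m - p - a) / M)) := by
    intro x _ y _ hxy
    simp only [Prod.mk.injEq] at hxy
    have h1 : x * M = y * M := by linarith [hxy.1]
    exact mul_right_cancel₀ hM0.ne' h1
  rw [Finset.card_image_of_injOn hinj, Int.card_Icc]
  have hK1 : -1 ≤ (m - p - a) / M := by
    refine (Int.le_ediv_iff_mul_le hM0).mpr ?_
    nlinarith
  have htn : (((m - p - a) / M + 1 - 0).toNat : ℤ) = (m - p - a) / M + 1 := by omega
  rw [htn]
  have hql : ((p + a : ℚ)) * d / m = ((p + a : ℤ) : ℚ) / ((M.toNat : ℕ) : ℚ) := by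
    have hmQ : (m : ℚ) = (d : ℚ) * (M : ℚ) := by exact_mod_cast hdM
    have hd0' : (d : ℚ) ≠ 0 := by exact_mod_cast hd0.ne'
    have hM0' : (M : ℚ) ≠ 0 := by exact_mod_cast hM0.ne'
    have hMt : ((M.toNat : ℕ) : ℚ) = (M : ℚ) := by
      norm_cast; omega
    rw [hmQ, hMt]
    push_cast
    field_simp
  have hceil : ∀ q : ℚ, ⌈q⌉ = -⌊-q⌋ := fun q => by rw [Int.floor_neg, neg_neg]
  rw [hql, hceil,
    show -(((p + a : ℤ) : ℚ) / ((M.toNat : ℕ) : ℚ))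
      = ((-(p + a) : ℤ) : ℚ) / ((M.toNat : ℕ) : ℚ) by push_cast; ring,
    Rat.floor_intCast_div_natCast]
  have hMt : (M.toNat : ℤ) = M := by omega
  rw [hMt]
  have hKval : (m - p - a) / M = d + (-(p + a)) / M := by
    rw [show m - p - a = -(p + a) + d * M by rw [hdM]; ring,
      Int.add_mul_ediv_right _ _ hM0.ne']
    ring
  omega
end

section
/- Let m ≥ n be positive integers with d = gcd(m, n). For any integer r, the number of integer solutions (x, y) of n·x − m·y = r with 0 ≤ x ≤ m and 0 ≤ y ≤ n is at most d + 1. -/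
theorem stmt_5 (m n r : ℤ) (hm : 0 < m) (hn : 0 < n) (hmn : n ≤ m) :
    ((Finset.Icc (0:ℤ) m ×ˢ Finset.Icc (0:ℤ) n).filter
      (fun p => n * p.1 - m * p.2 = r)).card ≤ Int.gcd m n + 1 := by
  set S := (Finset.Icc (0:ℤ) m ×ˢ Finset.Icc (0:ℤ) n).filter
      (fun p => n * p.1 - m * p.2 = r) with hS
  rcases S.eq_empty_or_nonempty with h | h
  · simp [h]
  obtain ⟨p0, hp0, hmin⟩ := S.exists_min_image (fun p => p.1) h
  set d : ℤ := (Int.gcd m n : ℤ) with hd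
  have hgcdpos : 0 < Int.gcd m n := Int.gcd_pos_of_ne_zero_left n hm.ne'
  have hd0 : 0 < d := by rw [hd]; exact_mod_cast hgcdpos
  have hdm : d ∣ m := Int.gcd_dvd_left m n
  have hdn : d ∣ n := Int.gcd_dvd_right m n
  set s : ℤ := m / d with hs
  have hms : m = d * s := (Int.mul_ediv_cancel' hdm).symm
  have hs0 : 0 < s := by nlinarith
  set n' : ℤ := n / d with hn'
  have hnn' : n = d * n' := (Int.mul_ediv_cancel' hdn).symm
  have hcop : IsCoprime s n' := by
    rw [Int.isCoprime_iff_gcd_eq_one]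
    have := Int.gcd_div_gcd_div_gcd (i := m) (j := n) hgcdpos
    exact this
  -- membership facts
  have mem_facts : ∀ p ∈ S, 0 ≤ p.1 ∧ p.1 ≤ m ∧ 0 ≤ p.2 ∧ p.2 ≤ n ∧
      n * p.1 - m * p.2 = r := by
    intro p hp
    simp only [hS, Finset.mem_filter, Finset.mem_product, Finset.mem_Icc] at hp
    tauto
  obtain ⟨hx0, hx0m, hy0, hy0n, heq0⟩ := mem_facts p0 hp0
  have key : ∀ p ∈ S, s ∣ (p.1 - p0.1) := by
    intro p hp
    obtain ⟨hx, hxm, hy, hyn, heq⟩ := mem_facts p hp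
    have h1 : n * (p.1 - p0.1) = m * (p.2 - p0.2) := by ring_nf; linarith
    have h2 : n' * (p.1 - p0.1) = s * (p.2 - p0.2) := by
      have : d * (n' * (p.1 - p0.1)) = d * (s * (p.2 - p0.2)) := by
        rw [← mul_assoc, ← hnn', ← mul_assoc, ← hms]; exact h1
      exact mul_left_cancel₀ hd0.ne' this
    exact hcop.dvd_of_dvd_mul_left ⟨p.2 - p0.2, h2.symm ▸ rfl⟩
  have hcard : S.card ≤ (Finset.Icc (0:ℤ) d).card := by
    apply Finset.card_le_card_of_injOn (fun p => (p.1 - p0.1) / s)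
    · intro p hp
      obtain ⟨hx, hxm, hy, hyn, heq⟩ := mem_facts p hp
      have hdvd := key p hp
      have hge : 0 ≤ p.1 - p0.1 := by have := hmin p hp; simpa using by linarith
      have hle : p.1 - p0.1 ≤ m := by linarith
      simp only [Finset.mem_coe, Finset.mem_Icc]
      constructor
      · exact Int.ediv_nonneg hge hs0.le
      · have := Int.ediv_le_ediv hs0 hle
        rwa [hms, mul_comm d s, Int.mul_ediv_cancel_left _ hs0.ne'] at this
    · intro p hp q hq hfeq
      obtain ⟨hxp, hxmp, hyp, hynp, heqp⟩ := mem_facts p hp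
      obtain ⟨hxq, hxmq, hyq, hynq, heqq⟩ := mem_facts q hq
      have hp1 : p.1 = p0.1 + s * ((p.1 - p0.1) / s) := by
        rw [Int.mul_ediv_cancel' (key p hp)]; ring
      have hq1 : q.1 = p0.1 + s * ((q.1 - p0.1) / s) := by
        rw [Int.mul_ediv_cancel' (key q hq)]; ring
      simp only at hfeq
      have hx : p.1 = q.1 := by rw [hp1, hq1, hfeq]
      have hy : p.2 = q.2 := by
        have : m * p.2 = m * q.2 := by rw [← hx] at heqq; linarith
        exact mul_left_cancel₀ hm.ne' this
      exact Prod.ext hx hy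
  calc S.card ≤ (Finset.Icc (0:ℤ) d).card := hcard
    _ = Int.gcd m n + 1 := by
        rw [Int.card_Icc, hd]
        omega
end

section
/- Let m ≥ n be positive integers with d = gcd(m, n). For each k with 0 < k < d, the number of multiples r of d with 0 ≤ r ≤ m·n such that the equation n·x − m·y = r has exactly k integer solutions with 0 ≤ x ≤ m and 0 ≤ y ≤ n equals m·n/d². -/
lemma ceil_le_iff' (b u t : ℤ) (hb : 0 < b) : -((-u)/b) ≤ t ↔ u ≤ b * t := by
  rw [neg_le, Int.le_ediv_iff_mul_le hb]
  constructor <;> intro h <;> nlinarith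

lemma inner_count (d a b c u : ℤ) (hd : 0 < d) (ha : 0 < a) (hb : 0 < b)
    (hab : IsCoprime a b) (hc0 : 0 ≤ c) (hca : c < a)
    (hs0 : 0 ≤ b * c + a * u) :
    ((Finset.Icc (0:ℤ) (d*a) ×ˢ Finset.Icc (0:ℤ) (d*b)).filter
      (fun p => (d*b) * p.1 - (d*a) * p.2 = d * (b * c + a * u))).card
    = (Finset.Icc (-((-u)/b)) (if c = 0 then d else d - 1)).card := by
  set t1 : ℤ := -((-u)/b) with ht1def
  set D : ℤ := if c = 0 then d else d - 1 with hD
  have ht1 : ∀ t : ℤ, t1 ≤ t ↔ u ≤ b * t := fun t => ceil_le_iff' b u t hb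
  have ht1nn : 0 ≤ t1 := by
    by_contra h
    push_neg at h
    have h2 : t1 ≤ -1 := by omega
    have h3 : u ≤ b * (-1) := (ht1 (-1)).mp h2
    nlinarith
  symm
  apply Finset.card_bij (fun t _ => ((c + a * t, b * t - u) : ℤ × ℤ))
  · intro t ht
    simp only [Finset.mem_Icc] at ht
    obtain ⟨htl, htr⟩ := ht
    have htu : u ≤ b * t := (ht1 t).mp htl
    have ht0 : 0 ≤ t := le_trans ht1nn htl
    have htD : (c = 0 ∧ t ≤ d) ∨ (1 ≤ c ∧ t ≤ d - 1) := by
      by_cases hc : c = 0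
      · left; exact ⟨hc, by simpa [hD, hc] using htr⟩
      · right; exact ⟨by omega, by simpa [hD, hc] using htr⟩
    simp only [Finset.mem_filter, Finset.mem_product, Finset.mem_Icc]
    refine ⟨⟨⟨by positivity, ?_⟩, ⟨by linarith, ?_⟩⟩, by ring⟩
    · rcases htD with ⟨hc, htd⟩ | ⟨hc, htd⟩ <;> nlinarith
    · rcases htD with ⟨hc, htd⟩ | ⟨hc, htd⟩
      · have hu0 : 0 ≤ u := by subst hc; nlinarith
        nlinarith
      · have hu1 : 1 - b ≤ u := by nlinarith
        nlinarith
  · intro s hs s' hs' h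
    simp only [Prod.mk.injEq] at h
    have := h.1
    have : a * s = a * s' := by linarith
    exact mul_left_cancel₀ (by positivity) this
  · intro p hp
    simp only [Finset.mem_filter, Finset.mem_product, Finset.mem_Icc] at hp
    obtain ⟨⟨⟨hx0, hx1⟩, ⟨hy0, hy1⟩⟩, heq⟩ := hp
    have heq2 : b * p.1 - a * p.2 = b * c + a * u := by
      have : d * (b * p.1 - a * p.2) = d * (b * c + a * u) := by ring_nf; ring_nf at heq; linarith
      exact mul_left_cancel₀ (by positivity) this
    have hdvd : a ∣ b * (p.1 - c) := ⟨p.2 + u, by linarith [heq2]⟩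
    obtain ⟨t, htt⟩ := hab.dvd_of_dvd_mul_left hdvd
    have hx : p.1 = c + a * t := by linarith
    have hy : p.2 = b * t - u := by
      have : a * p.2 = a * (b * t - u) := by
        have := heq2
        rw [hx] at this
        linarith
      exact mul_left_cancel₀ (by positivity) this
    refine ⟨t, ?_, by rw [← hx, ← hy]⟩
    simp only [Finset.mem_Icc]
    constructor
    · exact (ht1 t).mpr (by linarith)
    · by_cases hc : c = 0
      · simp only [hD, hc, if_true]
        subst hc
        simp at hx
        nlinarith [hx1, hx]
      · simp only [hD, hc, if_false]
        have : a * t ≤ d * a - 1 := by omega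
        nlinarith

theorem stmt_6 (m n : ℤ) (hm : 0 < m) (hn : 0 < n) (hmn : n ≤ m)
    (d : ℤ) (hd : d = Int.gcd m n) (k : ℕ) (hk0 : 0 < k) (hkd : (k : ℤ) < d) :
    (((Finset.Icc (0:ℤ) (m * n)).filter (fun r => d ∣ r ∧
      ((Finset.Icc (0:ℤ) m ×ˢ Finset.Icc (0:ℤ) n).filter
        (fun p => n * p.1 - m * p.2 = r)).card = k)).card : ℤ)
      = m * n / d ^ 2 := by
  have hk1 : (1:ℤ) ≤ (k:ℤ) := by exact_mod_cast hk0
  have hd0 : 0 < d := by linarith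
  have hgcdpos : 0 < Int.gcd m n := by
    rcases Nat.eq_zero_or_pos (Int.gcd m n) with h | h
    · rw [Int.gcd_eq_zero_iff] at h; omega
    · exact h
  have hdm : d ∣ m := hd ▸ Int.gcd_dvd_left m n
  have hdn : d ∣ n := hd ▸ Int.gcd_dvd_right m n
  obtain ⟨a, hma⟩ := hdm
  obtain ⟨b, hnb⟩ := hdn
  have ha : 0 < a := by nlinarith
  have hb : 0 < b := by nlinarith
  have hab : IsCoprime a b := by
    rw [Int.isCoprime_iff_gcd_eq_one]
    have h1 := Int.gcd_div_gcd_div_gcd hgcdpos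
    rw [← hd] at h1
    have ha' : m / d = a := by rw [hma, Int.mul_ediv_cancel_left _ hd0.ne']
    have hb' : n / d = b := by rw [hnb, Int.mul_ediv_cancel_left _ hd0.ne']
    rwa [ha', hb'] at h1
  obtain ⟨p, q, hpq⟩ := hab
  have hab : IsCoprime a b := ⟨p, q, hpq⟩
  subst hma hnb
  -- RHS simplification
  have hrhs : d * a * (d * b) / d ^ 2 = a * b := by
    have h1 : d * a * (d * b) = d ^ 2 * (a * b) := by ring
    rw [h1, Int.mul_ediv_cancel_left _ (pow_ne_zero 2 hd0.ne')]
  rw [hrhs]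
  -- the decomposition map
  set v : ℤ → ℤ := fun c => d + (if c = 0 then 1 else 0) - (k:ℤ) with hv
  set F : ℤ × ℤ → ℤ := fun cj => d * (b * cj.1 + a * (b * (v cj.1) - cj.2)) with hF
  set S : Finset (ℤ × ℤ) := Finset.Icc (0:ℤ) (a-1) ×ˢ Finset.Icc (0:ℤ) (b-1) with hS
  have himg :
      ((Finset.Icc (0:ℤ) (d * a * (d * b))).filter (fun r => d ∣ r ∧
        ((Finset.Icc (0:ℤ) (d*a) ×ˢ Finset.Icc (0:ℤ) (d*b)).filter
          (fun pp => (d*b) * pp.1 - (d*a) * pp.2 = r)).card = k)) = S.image F := by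
    ext r
    simp only [Finset.mem_filter, Finset.mem_Icc, Finset.mem_image, hS,
      Finset.mem_product]
    constructor
    · rintro ⟨⟨hr0, hr1⟩, ⟨s, hs⟩, hcount⟩
      subst hs
      set c : ℤ := (q * s) % a with hc
      have hc0 : 0 ≤ c := Int.emod_nonneg _ ha.ne'
      have hca : c < a := Int.emod_lt_of_pos _ ha
      set u : ℤ := s * p + b * ((q * s) / a) with hu
      have hscu : b * c + a * u = s := by
        have h2 : b * c + a * u = s * (p * a + q * b) := by
          rw [hc, Int.emod_def]; ring
        rw [h2, hpq, mul_one]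
      have hs0 : 0 ≤ s := by nlinarith
      rw [← hscu] at hcount
      rw [inner_count d a b c u hd0 ha hb hab hc0 hca (by rw [hscu]; exact hs0)] at hcount
      rw [Int.card_Icc] at hcount
      set D : ℤ := if c = 0 then d else d - 1 with hD
      set t1 : ℤ := -((-u)/b) with ht1
      have hDk : t1 = D + 1 - (k:ℤ) := by omega
      have hub : u ≤ b * t1 := (ceil_le_iff' b u t1 hb).mp le_rfl
      have hlb : b * (t1 - 1) < u := by
        by_contra h
        push_neg at h
        have : t1 ≤ t1 - 1 := (ceil_le_iff' b u (t1-1) hb).mpr h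
        omega
      have hvt : v c = t1 := by
        rw [hDk, hD]
        by_cases hcc : c = 0 <;> simp [hv, hcc] <;> omega
      refine ⟨(c, b * v c - u), ⟨⟨hc0, by omega⟩, ?_, ?_⟩, ?_⟩
      · show 0 ≤ b * v c - u
        rw [hvt]; linarith
      · show b * v c - u ≤ b - 1
        rw [hvt]; linarith
      · show d * (b * c + a * (b * v c - (b * v c - u))) = d * s
        rw [show b * v c - (b * v c - u) = u by ring, hscu]
    · rintro ⟨⟨c, j⟩, ⟨⟨hc0, hca⟩, ⟨hj0, hjb⟩⟩, hFr⟩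
      dsimp only at hc0 hca hj0 hjb
      set u : ℤ := b * v c - j with hu
      have hvc : (c = 0 ∧ v c = d + 1 - (k:ℤ)) ∨ (1 ≤ c ∧ v c = d - (k:ℤ)) := by
        by_cases hcc : c = 0
        · left; exact ⟨hcc, by simp [hv, hcc]⟩
        · right; exact ⟨by omega, by simp [hv, hcc]⟩
      have hs0 : 0 ≤ b * c + a * u := by
        rcases hvc with ⟨hcc, hveq⟩ | ⟨hcc, hveq⟩
        · rw [hu, hveq, hcc]
          have h2 : b * 2 ≤ b * (d + 1 - (k:ℤ)) := mul_le_mul_of_nonneg_left (by omega) hb.le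
          have h3 : (0:ℤ) ≤ b * (d + 1 - (k:ℤ)) - j := by linarith
          have h4 := mul_nonneg ha.le h3
          linarith
        · rw [hu, hveq]
          have h2 : b * 1 ≤ b * (d - (k:ℤ)) := mul_le_mul_of_nonneg_left (by omega) hb.le
          have h3 : (0:ℤ) ≤ b * (d - (k:ℤ)) - j := by linarith
          have h4 := mul_nonneg ha.le h3
          have h5 : (0:ℤ) ≤ b * c := mul_nonneg hb.le hc0
          linarith
      have hs1 : b * c + a * u ≤ d * a * b := by
        rcases hvc with ⟨hcc, hveq⟩ | ⟨hcc, hveq⟩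
        · rw [hu, hveq, hcc]
          have h2 : b * (d + 1 - (k:ℤ)) ≤ b * d := mul_le_mul_of_nonneg_left (by omega) hb.le
          have h3 : b * (d + 1 - (k:ℤ)) - j ≤ b * d := by linarith
          have h4 := mul_le_mul_of_nonneg_left h3 ha.le
          have h5 : a * (b * d) = d * a * b := by ring
          linarith
        · rw [hu, hveq]
          have h2 : b * (d - (k:ℤ)) ≤ b * (d - 1) := mul_le_mul_of_nonneg_left (by omega) hb.le
          have h3 : b * (d - (k:ℤ)) - j ≤ b * (d - 1) := by linarith
          have h4 := mul_le_mul_of_nonneg_left h3 ha.le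
          have h5 : b * c ≤ b * (a - 1) := mul_le_mul_of_nonneg_left (by omega) hb.le
          have h6 : b * (a - 1) + a * (b * (d - 1)) = d * a * b - b := by ring
          linarith
      have hFval : F (c, j) = d * (b * c + a * u) := by simp only [hF, hu]
      rw [← hFr, hFval]
      have hrub : d * (b * c + a * u) ≤ d * a * (d * b) := by
        have := mul_le_mul_of_nonneg_left hs1 hd0.le
        have h7 : d * (d * a * b) = d * a * (d * b) := by ring
        linarith
      refine ⟨⟨mul_nonneg hd0.le hs0, hrub⟩, ⟨b * c + a * u, rfl⟩, ?_⟩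
      rw [inner_count d a b c u hd0 ha hb hab hc0 (by omega) hs0]
      have hneg : -u = j + b * (-(v c)) := by rw [hu]; ring
      have hediv : (-u) / b = -(v c) := by
        rw [hneg, Int.add_mul_ediv_left j _ hb.ne', Int.ediv_eq_zero_of_lt hj0 (by omega), zero_add]
      rw [hediv, neg_neg, Int.card_Icc]
      rcases hvc with ⟨hcc, hveq⟩ | ⟨hcc, hveq⟩
      · rw [hveq, if_pos hcc]; omega
      · rw [hveq, if_neg (by omega)]; omega
  rw [himg]
  have hinj : Set.InjOn F S := by
    intro x hx y hy hxy
    simp only [hS, Finset.coe_product, Set.mem_prod, Finset.coe_Icc, Set.mem_Icc] at hx hy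
    obtain ⟨⟨hx1, hx2⟩, hx3, hx4⟩ := hx
    obtain ⟨⟨hy1, hy2⟩, hy3, hy4⟩ := hy
    simp only [hF] at hxy
    have hs : b * x.1 + a * (b * v x.1 - x.2) = b * y.1 + a * (b * v y.1 - y.2) :=
      mul_left_cancel₀ hd0.ne' hxy
    have hdvd : a ∣ b * (x.1 - y.1) := ⟨(b * v y.1 - y.2) - (b * v x.1 - x.2), by linarith⟩
    obtain ⟨e, he⟩ := hab.dvd_of_dvd_mul_left hdvd
    have he0 : e = 0 := by
      have h1 : e < 1 := by by_contra h; push_neg at h; nlinarith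
      have h2 : -1 < e := by by_contra h; push_neg at h; nlinarith
      omega
    have hcc : x.1 = y.1 := by rw [he0] at he; linarith
    have hjj : x.2 = y.2 := by
      rw [hcc] at hs
      have : a * (b * v y.1 - x.2) = a * (b * v y.1 - y.2) := by linarith
      have := mul_left_cancel₀ ha.ne' this
      linarith
    exact Prod.ext hcc hjj
  rw [Finset.card_image_of_injOn hinj]
  simp only [hS, Finset.card_product, Int.card_Icc]
  have h1 : (a - 1 + 1 - 0).toNat = a.toNat := by omega
  have h2 : (b - 1 + 1 - 0).toNat = b.toNat := by omega
  rw [h1, h2]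
  push_cast
  rw [Int.toNat_of_nonneg ha.le, Int.toNat_of_nonneg hb.le]
end

section
/- Let m ≥ n be positive integers with d = gcd(m, n). The number of multiples r of d with 0 ≤ r ≤ m·n such that the equation n·x − m·y = r has no integer solution with 0 ≤ x ≤ m and 0 ≤ y ≤ n equals (m·n − (m + n)·d + d²)/(2·d²). -/
open Finset

private lemma no_dvd_aux (a x : ℤ) (h1 : 1 ≤ x) (h2 : x ≤ a - 1) (hdvd : a ∣ x) : False := by
  have := Int.le_of_dvd (by omega) hdvd
  omega

private lemma countS (a b : ℤ) (ha : 0 < a) (hb : 0 < b) (hco : IsCoprime a b) :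
    2 * ((((Finset.Icc (1:ℤ) (a-1)) ×ˢ (Finset.Icc (1:ℤ) (b-1))).filter
      (fun p : ℤ × ℤ => b * p.1 < a * p.2)).card : ℤ) = (a - 1) * (b - 1) := by
  set R := (Finset.Icc (1:ℤ) (a-1)) ×ˢ (Finset.Icc (1:ℤ) (b-1)) with hR
  have hsplit := Finset.card_filter_add_card_filter_not
    (s := R) (fun p : ℤ × ℤ => b * p.1 < a * p.2)
  have hbij : (R.filter (fun p : ℤ × ℤ => b * p.1 < a * p.2)).card
      = (R.filter (fun p : ℤ × ℤ => ¬ (b * p.1 < a * p.2))).card := by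
    apply Finset.card_nbij (fun p => (a - p.1, b - p.2))
    · intro p hp
      simp only [hR, Finset.mem_coe, Finset.mem_filter, Finset.mem_product, Finset.mem_Icc] at hp ⊢
      obtain ⟨⟨⟨h1, h2⟩, h3, h4⟩, h5⟩ := hp
      refine ⟨⟨⟨by omega, by omega⟩, by omega, by omega⟩, ?_⟩
      simp only [not_lt]
      nlinarith
    · intro p hp q hq h
      simp only [Prod.mk.injEq] at h
      have h1 := h.1; have h2 := h.2
      exact Prod.ext (by omega) (by omega)
    · intro q hq
      simp only [Finset.coe_filter, Set.mem_setOf_eq, hR, Finset.mem_product,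
        Finset.mem_Icc, not_lt] at hq
      obtain ⟨⟨⟨h1, h2⟩, h3, h4⟩, h5⟩ := hq
      refine ⟨(a - q.1, b - q.2), ?_, by simp⟩
      simp only [Finset.coe_filter, Set.mem_setOf_eq, hR, Finset.mem_product, Finset.mem_Icc]
      refine ⟨⟨⟨by omega, by omega⟩, by omega, by omega⟩, ?_⟩
      have hne : a * q.2 ≠ b * q.1 := by
        intro he
        have hdvd : a ∣ q.1 := hco.dvd_of_dvd_mul_left ⟨q.2, by linarith⟩
        exact no_dvd_aux a q.1 h1 h2 hdvd
      nlinarith [lt_of_le_of_ne h5 hne]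
  have hcardR : (R.card : ℤ) = (a - 1) * (b - 1) := by
    rw [hR, Finset.card_product, Int.card_Icc, Int.card_Icc]
    push_cast [Int.toNat_of_nonneg (by omega : (0:ℤ) ≤ a - 1 + 1 - 1),
      Int.toNat_of_nonneg (by omega : (0:ℤ) ≤ b - 1 + 1 - 1)]
    ring
  have hcast : ((R.filter (fun p : ℤ × ℤ => b * p.1 < a * p.2)).card : ℤ)
      + ((R.filter (fun p : ℤ × ℤ => ¬ (b * p.1 < a * p.2))).card : ℤ) = (R.card : ℤ) := by
    exact_mod_cast congrArg Nat.cast hsplit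
  rw [hbij] at *
  linarith

open Finset

set_option maxHeartbeats 1000000

private lemma no_dvd_aux' (a x : ℤ) (h1 : 1 ≤ x) (h2 : x ≤ a - 1) (hdvd : a ∣ x) : False := by
  have := Int.le_of_dvd (by omega) hdvd
  omega

private lemma badset_eq (m n d a b : ℤ) (hd : 0 < d) (ha : 0 < a) (hb : 0 < b)
    (ham : m = d * a) (hbn : n = d * b) (hco : IsCoprime a b) :
    (Finset.Icc (0:ℤ) (m * n)).filter (fun r => d ∣ r ∧
      ((Finset.Icc (0:ℤ) m ×ˢ Finset.Icc (0:ℤ) n).filter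
        (fun p => n * p.1 - m * p.2 = r)).card = 0)
    = ((Finset.Icc (1:ℤ) (a-1) ×ˢ Finset.Icc (1:ℤ) (b-1)).filter
        (fun p : ℤ × ℤ => b * p.1 < a * p.2)).image
      (fun p : ℤ × ℤ => d * (a * b * d + b * p.1 - a * p.2)) := by
  have hd1 : (1:ℤ) ≤ d := hd
  subst ham hbn
  ext r
  simp only [Finset.mem_filter, Finset.mem_image, Finset.mem_Icc, Finset.mem_product,
    Finset.card_eq_zero, Finset.filter_eq_empty_iff]
  constructor
  · rintro ⟨⟨hr0, hr1⟩, ⟨s, hs⟩, hno⟩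
    have hs0 : 0 ≤ s := by
      by_contra h
      push_neg at h
      have := mul_le_mul_of_nonneg_left (by omega : s ≤ -1) hd.le
      linarith
    have hsab : s ≤ a * b * d := by
      by_contra h
      push_neg at h
      have := mul_le_mul_of_nonneg_left (by omega : a * b * d + 1 ≤ s) hd.le
      nlinarith
    obtain ⟨u, v, huv⟩ := id hco
    set x₀ := s * v % a with hx0def
    have hx0l : 0 ≤ x₀ := Int.emod_nonneg _ ha.ne'
    have hx0r : x₀ < a := Int.emod_lt_of_pos _ ha
    have hdvd2 : a ∣ b * x₀ - s := by
      refine ⟨-(s*u) - b*(s*v/a), ?_⟩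
      have h := Int.emod_def (s*v) a
      rw [hx0def, h]
      linear_combination s * huv
    set y₀ := (b * x₀ - s) / a with hy0def
    have hay : a * y₀ = b * x₀ - s := Int.mul_ediv_cancel' hdvd2
    by_cases hx0 : x₀ = 0
    · -- then a ∣ s; there is a solution, contradiction
      exfalso
      set k := -y₀ with hkdef
      have hsk : s = a * k := by rw [hkdef]; rw [hx0] at hay; linarith
      have hk0 : 0 ≤ k := by
        by_contra h
        push_neg at h
        have := mul_le_mul_of_nonneg_left (by omega : k ≤ -1) ha.le
        linarith
      have hkbd : k ≤ b * d := by
        by_contra h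
        push_neg at h
        have := mul_le_mul_of_nonneg_left (by omega : b * d + 1 ≤ k) ha.le
        nlinarith
      set t := (k + b - 1) / b with htdef
      have hmod := Int.emod_def (k + b - 1) b
      have hmod0 : 0 ≤ (k + b - 1) % b := Int.emod_nonneg _ hb.ne'
      have hmodb : (k + b - 1) % b < b := Int.emod_lt_of_pos _ hb
      have h1 : k ≤ b * t := by rw [htdef]; linarith
      have h2 : b * t ≤ k + b - 1 := by rw [htdef]; linarith
      have ht0 : 0 ≤ t := Int.ediv_nonneg (by linarith) hb.le
      have htd : t ≤ d := by
        by_contra h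
        push_neg at h
        have := mul_le_mul_of_nonneg_left (by omega : d + 1 ≤ t) hb.le
        nlinarith
      have hmem : (0 ≤ a * t ∧ a * t ≤ d * a) ∧ 0 ≤ b * t - k ∧ b * t - k ≤ d * b := by
        refine ⟨⟨mul_nonneg ha.le ht0, ?_⟩, by linarith, ?_⟩
        · have := mul_le_mul_of_nonneg_left htd ha.le
          linarith
        · have := mul_le_mul_of_nonneg_left hd1 hb.le
          linarith
      exact hno (x := (a * t, b * t - k)) hmem
        (by linear_combination (-1) * hs - d * hsk)
    · -- x₀ ∈ [1, a-1]
      have hx1 : 1 ≤ x₀ := by omega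
      have hbx0 : b * x₀ ≤ b * (a - 1) := mul_le_mul_of_nonneg_left (by omega) hb.le
      have hyb : y₀ ≤ b - 1 := by
        by_contra h
        push_neg at h
        have := mul_le_mul_of_nonneg_left (by omega : b ≤ y₀) ha.le
        nlinarith
      by_cases hyneg : b - b * d ≤ y₀
      · -- there is a solution, contradiction
        exfalso
        set t := (-y₀ + b - 1) / b with htdef
        have hmod := Int.emod_def (-y₀ + b - 1) b
        have hmod0 : 0 ≤ (-y₀ + b - 1) % b := Int.emod_nonneg _ hb.ne'
        have hmodb : (-y₀ + b - 1) % b < b := Int.emod_lt_of_pos _ hb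
        have h1 : -y₀ ≤ b * t := by rw [htdef]; linarith
        have h2 : b * t ≤ -y₀ + b - 1 := by rw [htdef]; linarith
        have ht0 : 0 ≤ t := Int.ediv_nonneg (by linarith) hb.le
        have htd : t ≤ d - 1 := by
          by_contra h
          push_neg at h
          have := mul_le_mul_of_nonneg_left (by omega : d ≤ t) hb.le
          linarith
        have hmem : (0 ≤ x₀ + a * t ∧ x₀ + a * t ≤ d * a)
            ∧ 0 ≤ y₀ + b * t ∧ y₀ + b * t ≤ d * b := by
          refine ⟨⟨by linarith [mul_nonneg ha.le ht0], ?_⟩, by linarith, ?_⟩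
          · have := mul_le_mul_of_nonneg_left htd ha.le
            linarith
          · have := mul_le_mul_of_nonneg_left hd1 hb.le
            linarith
        exact hno (x := (x₀ + a * t, y₀ + b * t)) hmem
          (by linear_combination (-1) * hs - d * hay)
      · -- bad case: produce the pair
        push_neg at hyneg
        have hy' : y₀ ≤ b - b * d - 1 := by omega
        have hsabd : s < a * b * d := by
          rcases lt_or_eq_of_le hsab with h | h
          · exact h
          · exfalso
            have hdvdbx : a ∣ b * x₀ := ⟨y₀ + b * d, by linear_combination (-1) * hay + h⟩
            exact no_dvd_aux' a x₀ hx1 (by omega) (hco.dvd_of_dvd_mul_left hdvdbx)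
        have hw1 : 1 ≤ b * d + y₀ := by
          by_contra h
          push_neg at h
          have h3 := mul_le_mul_of_nonneg_left (by omega : y₀ ≤ -(b*d)) ha.le
          have h4 := mul_le_mul_of_nonneg_left hx1 hb.le
          nlinarith
        refine ⟨(x₀, b * d + y₀), ?_, ?_⟩
        · simp only [Finset.mem_filter, Finset.mem_product, Finset.mem_Icc]
          refine ⟨⟨⟨hx1, by omega⟩, hw1, by omega⟩, ?_⟩
          nlinarith [hay, hsabd]
        · linear_combination (-1) * hs - d * hay
  · rintro ⟨p, hp, rfl⟩
    obtain ⟨⟨⟨hx1, hx2⟩, hw1, hw2⟩, hlt⟩ := hp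
    have haw : a * p.2 ≤ a * (b - 1) := mul_le_mul_of_nonneg_left hw2 ha.le
    have hbx : b * 1 ≤ b * p.1 := mul_le_mul_of_nonneg_left hx1 hb.le
    have habd : a * b * 1 ≤ a * b * d := mul_le_mul_of_nonneg_left hd1 (mul_pos ha hb).le
    have hin : 0 ≤ a * b * d + b * p.1 - a * p.2 := by nlinarith
    have hin2 : a * b * d + b * p.1 - a * p.2 ≤ a * b * d := by linarith
    refine ⟨⟨mul_nonneg hd.le hin, ?_⟩, ⟨_, rfl⟩, ?_⟩
    · have := mul_le_mul_of_nonneg_left hin2 hd.le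
      nlinarith
    · intro q hq heq
      obtain ⟨⟨hX0, hXm⟩, hY0, hYn⟩ := hq
      have heq2 : b * q.1 - a * q.2 = a * b * d + b * p.1 - a * p.2 :=
        mul_left_cancel₀ hd.ne' (by linear_combination heq)
      have hdvdX : a ∣ b * (q.1 - p.1) := ⟨b * d + q.2 - p.2, by linear_combination heq2⟩
      obtain ⟨t, ht⟩ := hco.dvd_of_dvd_mul_left hdvdX
      have hY : q.2 = b * t + p.2 - b * d := by
        have h3 : a * (b * t - q.2) = a * (b * d - p.2) := by
          linear_combination heq2 - b * ht
        have := mul_left_cancel₀ ha.ne' h3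
        linarith
      have htd : d ≤ t := by
        by_contra h
        push_neg at h
        have h5 : b * t ≤ b * (d - 1) := mul_le_mul_of_nonneg_left (by omega) hb.le
        linarith
      have hat : a * d ≤ a * t := mul_le_mul_of_nonneg_left htd ha.le
      linarith

theorem stmt_7 (m n : ℤ) (hm : 0 < m) (hn : 0 < n) (hmn : n ≤ m)
    (d : ℤ) (hd : d = Int.gcd m n) :
    (((Finset.Icc (0:ℤ) (m * n)).filter (fun r => d ∣ r ∧
      ((Finset.Icc (0:ℤ) m ×ˢ Finset.Icc (0:ℤ) n).filter
        (fun p => n * p.1 - m * p.2 = r)).card = 0)).card : ℤ)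
      = (m * n - (m + n) * d + d ^ 2) / (2 * d ^ 2) := by
  have hdpos : 0 < d := by
    rw [hd]
    exact_mod_cast Int.gcd_pos_of_ne_zero_left n hm.ne'
  have hdm : d ∣ m := hd ▸ Int.gcd_dvd_left m n
  have hdn : d ∣ n := hd ▸ Int.gcd_dvd_right m n
  obtain ⟨a, ham⟩ := hdm
  obtain ⟨b, hbn⟩ := hdn
  have ha' : a = m / d := by
    rw [ham, Int.mul_ediv_cancel_left _ hdpos.ne']
  have hb' : b = n / d := by
    rw [hbn, Int.mul_ediv_cancel_left _ hdpos.ne']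
  have hgcd1 : Int.gcd a b = 1 := by
    rw [ha', hb', hd]
    exact Int.gcd_div_gcd_div_gcd (by rw [hd] at hdpos; exact_mod_cast hdpos)
  have hco : IsCoprime a b := Int.isCoprime_iff_gcd_eq_one.mpr hgcd1
  have ha : 0 < a := by
    by_contra h
    push_neg at h
    have := mul_le_mul_of_nonneg_left h hdpos.le
    nlinarith
  have hb : 0 < b := by
    by_contra h
    push_neg at h
    have := mul_le_mul_of_nonneg_left h hdpos.le
    nlinarith
  rw [badset_eq m n d a b hdpos ha hb ham hbn hco]
  have hinj : Set.InjOn (fun p : ℤ × ℤ => d * (a * b * d + b * p.1 - a * p.2))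
      ↑((Finset.Icc (1:ℤ) (a-1) ×ˢ Finset.Icc (1:ℤ) (b-1)).filter
        (fun p : ℤ × ℤ => b * p.1 < a * p.2)) := by
    intro p hp q hq h
    simp only [Finset.coe_filter, Set.mem_setOf_eq, Finset.mem_product,
      Finset.mem_Icc] at hp hq
    obtain ⟨⟨⟨hp1, hp2⟩, hp3, hp4⟩, hp5⟩ := hp
    obtain ⟨⟨⟨hq1, hq2⟩, hq3, hq4⟩, hq5⟩ := hq
    simp only at h
    have e1 : a * b * d + b * p.1 - a * p.2 = a * b * d + b * q.1 - a * q.2 :=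
      mul_left_cancel₀ hdpos.ne' h
    have hdvd : a ∣ b * (p.1 - q.1) := ⟨p.2 - q.2, by linear_combination e1⟩
    obtain ⟨t, ht⟩ := hco.dvd_of_dvd_mul_left hdvd
    have ht0 : t = 0 := by
      by_contra h0
      rcases lt_or_gt_of_ne h0 with h0 | h0
      · have := mul_le_mul_of_nonneg_left (by omega : t ≤ -1) ha.le
        nlinarith
      · have := mul_le_mul_of_nonneg_left (by omega : 1 ≤ t) ha.le
        nlinarith
    have hpq1 : p.1 = q.1 := by rw [ht0, mul_zero] at ht; omega
    have hpq2 : p.2 = q.2 := by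
      have : a * p.2 = a * q.2 := by linear_combination (-1) * e1 + b * hpq1
      exact mul_left_cancel₀ ha.ne' this
    exact Prod.ext hpq1 hpq2
  rw [Finset.card_image_of_injOn hinj]
  have hc := countS a b ha hb hco
  have hnum : m * n - (m + n) * d + d ^ 2 = d ^ 2 * ((a - 1) * (b - 1)) := by
    rw [ham, hbn]; ring
  rw [hnum, show (2 * d ^ 2 : ℤ) = d ^ 2 * 2 from by ring,
    Int.mul_ediv_mul_of_pos _ _ (by positivity), ← hc,
    Int.mul_ediv_cancel_left _ two_ne_zero]
end

section
/- Let m ≥ n be positive integers with d = gcd(m, n). The number of multiples r of d with 0 ≤ r ≤ m·n such that the equation n·x − m·y = r has exactly d integer solutions with 0 ≤ x ≤ m and 0 ≤ y ≤ n equals (m·n + (m + n)·d − d²)/(2·d²). -/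
open Finset


private noncomputable def sol (a b d s : ℤ) : Finset (ℤ × ℤ) :=
  (Finset.Icc (0:ℤ) (d*a) ×ˢ Finset.Icc (0:ℤ) (d*b)).filter
    (fun p => (d*b) * p.1 - (d*a) * p.2 = d * s)

private lemma sol_good (a b d s x₀ y₀ : ℤ) (ha : 0 < a) (hb : 0 < b) (hd : 0 < d)
    (hco : IsCoprime a b) (hx1 : 1 ≤ x₀) (hxa : x₀ ≤ a) (hy0 : 0 ≤ y₀) (hyb : y₀ < b)
    (heq : b * x₀ - a * y₀ = s) :
    sol a b d s = Finset.image (fun t => (x₀ + t*a, y₀ + t*b)) (Finset.Icc (0:ℤ) (d-1)) := by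
  ext ⟨x, y⟩
  simp only [sol, mem_filter, mem_product, mem_Icc, mem_image, Prod.mk.injEq]
  constructor
  · rintro ⟨⟨⟨hx0, hxm⟩, hy0', hyn⟩, hlin⟩
    have hkey : b * x - a * y = s := by
      have : d * (b * x - a * y) = d * s := by ring_nf; ring_nf at hlin; linarith
      exact mul_left_cancel₀ (ne_of_gt hd) this
    have hdvd : a ∣ (x - x₀) := by
      refine hco.dvd_of_dvd_mul_left ⟨y - y₀, ?_⟩
      ring_nf; nlinarith [hkey, heq]
    obtain ⟨t, ht⟩ := hdvd
    have hy' : y = y₀ + t * b := by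
      have h2 : a * (y - y₀) = a * (t * b) := by nlinarith [hkey, heq]
      have := mul_left_cancel₀ (ne_of_gt ha) h2
      linarith
    have hx' : x = x₀ + t * a := by linarith [ht]
    refine ⟨t, ⟨?_, ?_⟩, hx'.symm, hy'.symm⟩
    · -- 0 ≤ t
      by_contra hneg
      push_neg at hneg
      have : t ≤ -1 := by omega
      have : y₀ + t * b < 0 := by nlinarith
      omega
    · -- t ≤ d - 1
      by_contra hbig
      push_neg at hbig
      have : d ≤ t := by omega
      have : d * a < x₀ + t * a := by nlinarith
      omega
  · rintro ⟨t, ⟨ht0, ht1⟩, hx, hy⟩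
    subst hx; subst hy
    refine ⟨⟨⟨by nlinarith, by nlinarith⟩, by nlinarith, by nlinarith⟩, by linear_combination d * heq⟩

private lemma sol_good_card (a b d s x₀ y₀ : ℤ) (ha : 0 < a) (hb : 0 < b) (hd : 0 < d)
    (hco : IsCoprime a b) (hx1 : 1 ≤ x₀) (hxa : x₀ ≤ a) (hy0 : 0 ≤ y₀) (hyb : y₀ < b)
    (heq : b * x₀ - a * y₀ = s) :
    ((sol a b d s).card : ℤ) = d := by
  rw [sol_good a b d s x₀ y₀ ha hb hd hco hx1 hxa hy0 hyb heq]
  rw [Finset.card_image_of_injective _ (fun t t' h => by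
    have : x₀ + t * a = x₀ + t' * a := congrArg Prod.fst h
    have : t * a = t' * a := by linarith
    exact mul_right_cancel₀ (ne_of_gt ha) this)]
  rw [Int.card_Icc]
  omega

private lemma sol_bad (a b d s x₀ y₀ : ℤ) (ha : 0 < a) (hb : 0 < b) (hd : 0 < d)
    (hco : IsCoprime a b) (hx1 : 1 ≤ x₀) (hxa : x₀ ≤ a) (hy0 : y₀ < 0)
    (heq : b * x₀ - a * y₀ = s) :
    ((sol a b d s).card : ℤ) ≤ d - 1 := by
  have hsub : sol a b d s ⊆ Finset.image (fun t => (x₀ + t*a, y₀ + t*b)) (Finset.Icc (1:ℤ) (d-1)) := by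
    intro ⟨x, y⟩ hmem
    simp only [sol, mem_filter, mem_product, mem_Icc] at hmem
    obtain ⟨⟨⟨hx0, hxm⟩, hy0', hyn⟩, hlin⟩ := hmem
    have hkey : b * x - a * y = s := by
      have : d * (b * x - a * y) = d * s := by ring_nf; ring_nf at hlin; linarith
      exact mul_left_cancel₀ (ne_of_gt hd) this
    have hdvd : a ∣ (x - x₀) := by
      refine hco.dvd_of_dvd_mul_left ⟨y - y₀, ?_⟩
      ring_nf; nlinarith [hkey, heq]
    obtain ⟨t, ht⟩ := hdvd
    have hy' : y = y₀ + t * b := by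
      have h2 : a * (y - y₀) = a * (t * b) := by nlinarith [hkey, heq]
      have := mul_left_cancel₀ (ne_of_gt ha) h2
      linarith
    have hx' : x = x₀ + t * a := by linarith [ht]
    simp only [mem_image, mem_Icc, Prod.mk.injEq]
    refine ⟨t, ⟨?_, ?_⟩, hx'.symm, hy'.symm⟩
    · by_contra hneg
      push_neg at hneg
      have : t ≤ 0 := by omega
      have : y₀ + t * b < 0 := by nlinarith
      omega
    · by_contra hbig
      push_neg at hbig
      have : d ≤ t := by omega
      have : d * a < x₀ + t * a := by nlinarith
      omega
  calc ((sol a b d s).card : ℤ)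
      ≤ ((Finset.image (fun t => (x₀ + t*a, y₀ + t*b)) (Finset.Icc (1:ℤ) (d-1))).card : ℤ) := by
        exact_mod_cast Finset.card_le_card hsub
    _ ≤ ((Finset.Icc (1:ℤ) (d-1)).card : ℤ) := by exact_mod_cast Finset.card_image_le
    _ ≤ d - 1 := by rw [Int.card_Icc]; omega

private lemma sol_zero (a b d : ℤ) (ha : 0 < a) (hb : 0 < b) (hd : 0 < d)
    (hco : IsCoprime a b) :
    ((sol a b d 0).card : ℤ) = d + 1 := by
  have himg : sol a b d 0 = Finset.image (fun t => (t*a, t*b)) (Finset.Icc (0:ℤ) d) := by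
    ext ⟨x, y⟩
    simp only [sol, mem_filter, mem_product, mem_Icc, mem_image, Prod.mk.injEq]
    constructor
    · rintro ⟨⟨⟨hx0, hxm⟩, hy0', hyn⟩, hlin⟩
      have hkey : b * x - a * y = 0 := by
        have : d * (b * x - a * y) = d * 0 := by ring_nf; ring_nf at hlin; linarith
        exact mul_left_cancel₀ (ne_of_gt hd) this
      have hdvd : a ∣ x := by
        refine hco.dvd_of_dvd_mul_left ⟨y, ?_⟩
        ring_nf; nlinarith [hkey]
      obtain ⟨t, ht⟩ := hdvd
      have hy' : y = t * b := by
        have h2 : a * y = a * (t * b) := by nlinarith [hkey]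
        exact mul_left_cancel₀ (ne_of_gt ha) h2
      refine ⟨t, ⟨by nlinarith, by nlinarith⟩, by linarith, hy'.symm⟩
    · rintro ⟨t, ⟨ht0, ht1⟩, hx, hy⟩
      subst hx; subst hy
      refine ⟨⟨⟨by nlinarith, by nlinarith⟩, by nlinarith, by nlinarith⟩, by ring⟩
  rw [himg]
  rw [Finset.card_image_of_injective _ (fun t t' h => by
    have : t * a = t' * a := congrArg Prod.fst h
    exact mul_right_cancel₀ (ne_of_gt ha) this)]
  rw [Int.card_Icc]
  omega


private noncomputable def Dgt (a b : ℤ) : Finset (ℤ × ℤ) :=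
  (Finset.Icc (0:ℤ) a ×ˢ Finset.Icc (0:ℤ) b).filter (fun p => a * p.2 < b * p.1)

private lemma Dgt_card (a b : ℤ) (ha : 0 < a) (hb : 0 < b) (hco : IsCoprime a b) :
    2 * ((Dgt a b).card : ℤ) + 2 = (a + 1) * (b + 1) := by
  set S := Finset.Icc (0:ℤ) a ×ˢ Finset.Icc (0:ℤ) b with hS
  have hcardS : (S.card : ℤ) = (a + 1) * (b + 1) := by
    rw [hS, Finset.card_product, Int.card_Icc, Int.card_Icc]
    push_cast [Int.toNat_of_nonneg (by omega : (0:ℤ) ≤ a + 1 - 0),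
      Int.toNat_of_nonneg (by omega : (0:ℤ) ≤ b + 1 - 0)]
    ring
  have hsplit : (Dgt a b).card + (S.filter (fun p => ¬ a * p.2 < b * p.1)).card = S.card :=
    Finset.card_filter_add_card_filter_not _
  have hunion : S.filter (fun p => ¬ a * p.2 < b * p.1)
      = (S.filter (fun p => b * p.1 < a * p.2)) ∪ (S.filter (fun p => b * p.1 = a * p.2)) := by
    ext p
    simp only [mem_filter, mem_union, not_lt]
    constructor
    · rintro ⟨hp, hle⟩
      rcases lt_or_eq_of_le hle with h | h
      · exact Or.inl ⟨hp, h⟩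
      · exact Or.inr ⟨hp, h⟩
    · rintro (⟨hp, h⟩ | ⟨hp, h⟩)
      · exact ⟨hp, le_of_lt h⟩
      · exact ⟨hp, le_of_eq h⟩
  have hdisj : Disjoint (S.filter (fun p => b * p.1 < a * p.2)) (S.filter (fun p => b * p.1 = a * p.2)) := by
    rw [Finset.disjoint_left]
    intro p h1 h2
    simp only [mem_filter] at h1 h2
    omega
  have hlt_card : (S.filter (fun p => b * p.1 < a * p.2)).card = (Dgt a b).card := by
    apply Finset.card_bij' (fun p _ => (a - p.1, b - p.2)) (fun p _ => (a - p.1, b - p.2))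
    · intro p hp
      simp only [Dgt, mem_filter, hS, mem_product, mem_Icc] at *
      refine ⟨⟨⟨by omega, by omega⟩, by omega, by omega⟩, by nlinarith [hp.2]⟩
    · intro p hp
      simp only [Dgt, mem_filter, hS, mem_product, mem_Icc] at *
      refine ⟨⟨⟨by omega, by omega⟩, by omega, by omega⟩, by nlinarith [hp.2]⟩
    · intro p _; simp
    · intro p _; simp
  have heq_set : S.filter (fun p => b * p.1 = a * p.2) = {((0:ℤ),(0:ℤ)), (a, b)} := by
    ext ⟨x, y⟩
    simp only [mem_filter, hS, mem_product, mem_Icc, Finset.mem_insert, Finset.mem_singleton,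
      Prod.mk.injEq]
    constructor
    · rintro ⟨⟨⟨hx0, hxa⟩, hy0, hyb⟩, heq⟩
      have hdvd : a ∣ x := by
        refine hco.dvd_of_dvd_mul_left ⟨y, ?_⟩
        linarith [heq]
      obtain ⟨k, hk⟩ := hdvd
      have hk0 : 0 ≤ k := by nlinarith
      have hk1 : k ≤ 1 := by nlinarith
      interval_cases k
      · left
        have hx : x = 0 := by omega
        refine ⟨hx, ?_⟩
        rw [hx] at heq
        have : a * y = 0 := by linarith
        rcases mul_eq_zero.mp this with h | h
        · omega
        · exact h
      · right
        constructor
        · omega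
        · have hx : x = a := by omega
          have : a * y = a * b := by rw [hx] at heq; linarith [heq]
          exact mul_left_cancel₀ (ne_of_gt ha) this
    · rintro (⟨rfl, rfl⟩ | ⟨rfl, rfl⟩) <;> constructor
      · exact ⟨⟨le_refl _, by omega⟩, le_refl _, by omega⟩
      · ring
      · exact ⟨⟨by omega, le_refl _⟩, by omega, le_refl _⟩
      · ring
  have heq_card : (S.filter (fun p => b * p.1 = a * p.2)).card = 2 := by
    rw [heq_set]
    rw [Finset.card_insert_of_notMem (by
      simp only [Finset.mem_singleton, Prod.mk.injEq, not_and]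
      intro h; omega), Finset.card_singleton]
  have := hsplit
  rw [hunion, Finset.card_union_of_disjoint hdisj, hlt_card, heq_card] at this
  have : ((Dgt a b).card : ℤ) + (((Dgt a b).card : ℤ) + 2) = (S.card : ℤ) := by exact_mod_cast this
  omega

private lemma f_injOn (a b d : ℤ) (ha0 : 0 < a) (hb0 : 0 < b) (hd0 : 0 < d)
    (hco : IsCoprime a b) :
    Set.InjOn (fun p : ℤ × ℤ => d * (b * p.1 - a * p.2)) (Dgt a b) := by
  intro p hp p' hp' hfe
  rw [Finset.mem_coe] at hp hp'
  obtain ⟨x, y⟩ := p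
  obtain ⟨x', y'⟩ := p'
  simp only [Dgt, mem_filter, mem_product, mem_Icc] at hp hp'
  obtain ⟨⟨⟨hx0, hxa⟩, hy0, hyb⟩, hlt⟩ := hp
  obtain ⟨⟨⟨hx0', hxa'⟩, hy0', hyb'⟩, hlt'⟩ := hp'
  simp only at hfe
  have hkey : b * x - a * y = b * x' - a * y' := mul_left_cancel₀ (ne_of_gt hd0) hfe
  have hdvd : a ∣ (x - x') := by
    refine hco.dvd_of_dvd_mul_left ⟨y - y', ?_⟩
    linarith [hkey]
  obtain ⟨k, hk⟩ := hdvd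
  have hyk : y - y' = b * k := by
    have h2 : a * (y - y') = a * (b * k) := by nlinarith [hkey]
    exact mul_left_cancel₀ (ne_of_gt ha0) h2
  have h3 : -a ≤ a * k := by rw [← hk]; omega
  have h4 : a * k ≤ a := by rw [← hk]; omega
  have hk1 : -1 ≤ k := by nlinarith [h3]
  have hk2 : k ≤ 1 := by nlinarith [h4]
  have hk012 : k = -1 ∨ k = 0 ∨ k = 1 := by omega
  rcases hk012 with rfl | rfl | rfl
  · exfalso
    have hx' : x' = x + a := by omega
    have hy' : y' = y + b := by nlinarith [hyk]
    have : x' = a := by omega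
    have : y' = b := by omega
    nlinarith
  · have h1 : x = x' := by omega
    have h2 : y = y' := by nlinarith [hyk]
    simp [h1, h2]
  · exfalso
    have hx' : x = x' + a := by omega
    have hy' : y = y' + b := by nlinarith [hyk]
    have : x = a := by omega
    have : y = b := by omega
    nlinarith

set_option maxHeartbeats 1000000 in
theorem stmt_8 (m n : ℤ) (hm : 0 < m) (hn : 0 < n) (hmn : n ≤ m)
    (d : ℤ) (hd : d = Int.gcd m n) :
    (((Finset.Icc (0:ℤ) (m * n)).filter (fun r => d ∣ r ∧
      (((Finset.Icc (0:ℤ) m ×ˢ Finset.Icc (0:ℤ) n).filter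
        (fun p => n * p.1 - m * p.2 = r)).card : ℤ) = d)).card : ℤ)
      = (m * n + (m + n) * d - d ^ 2) / (2 * d ^ 2) := by
  have hd0 : 0 < d := by
    rw [hd]
    have : Int.gcd m n ≠ 0 := by
      simp [Int.gcd_eq_zero_iff]
      omega
    exact_mod_cast Nat.pos_of_ne_zero this
  obtain ⟨a, ha⟩ : d ∣ m := hd ▸ Int.gcd_dvd_left m n
  obtain ⟨b, hb⟩ : d ∣ n := hd ▸ Int.gcd_dvd_right m n
  have ha0 : 0 < a := by nlinarith
  have hb0 : 0 < b := by nlinarith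
  have hco : IsCoprime a b := by
    rw [Int.isCoprime_iff_gcd_eq_one]
    have hg : Int.gcd m n = d.natAbs * Int.gcd a b := by
      rw [ha, hb, Int.gcd_mul_left]
    have hd' : d = d * (Int.gcd a b : ℤ) := by
      calc d = (Int.gcd m n : ℤ) := hd
        _ = (d.natAbs : ℤ) * (Int.gcd a b : ℤ) := by rw [hg]; push_cast; ring
        _ = d * (Int.gcd a b : ℤ) := by rw [Int.natCast_natAbs]; simp [abs_of_pos hd0]
    have : (Int.gcd a b : ℤ) = 1 := by
      have hne : d ≠ 0 := ne_of_gt hd0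
      have h1 := mul_left_cancel₀ hne (hd'.symm.trans (mul_one d).symm)
      nlinarith [hd']
    exact_mod_cast this
  subst ha hb
  clear hd hm hn hmn
  -- main set equality
  have hset : ((Finset.Icc (0:ℤ) (d*a * (d*b))).filter (fun r => d ∣ r ∧
      (((Finset.Icc (0:ℤ) (d*a) ×ˢ Finset.Icc (0:ℤ) (d*b)).filter
        (fun p => (d*b) * p.1 - (d*a) * p.2 = r)).card : ℤ) = d))
      = Finset.image (fun p => d * (b * p.1 - a * p.2)) (Dgt a b) := by
    ext r
    simp only [mem_filter, mem_Icc, mem_image]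
    constructor
    · rintro ⟨⟨hr0, hr1⟩, ⟨s, rfl⟩, hcard⟩
      have hcard' : ((sol a b d s).card : ℤ) = d := hcard
      have hs0 : 0 ≤ s := by nlinarith
      have hs1 : 1 ≤ s := by
        rcases eq_or_lt_of_le hs0 with h | h
        · exfalso
          rw [← h] at hcard'
          have := sol_zero a b d ha0 hb0 hd0 hco
          omega
        · omega
      have hsmall : ∃ p ∈ Dgt a b, d * (b * p.1 - a * p.2) = d * s := by
        by_contra hno
        push_neg at hno
        have hne : (sol a b d s).Nonempty := by
          rw [← Finset.card_pos]
          omega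
        obtain ⟨⟨X, Y⟩, hXY⟩ := hne
        simp only [sol, mem_filter, mem_product, mem_Icc] at hXY
        obtain ⟨⟨⟨hX0, hX1⟩, hY0, hY1⟩, hlin⟩ := hXY
        have hkey : b * X - a * Y = s := by
          have : d * (b * X - a * Y) = d * s := by ring_nf; ring_nf at hlin; linarith
          exact mul_left_cancel₀ (ne_of_gt hd0) this
        set q := (X - 1) / a with hq
        set x₀ := X - a * q with hx₀
        set y₀ := Y - b * q with hy₀
        have hmod : x₀ - 1 = (X - 1) % a := by rw [Int.emod_def, hx₀, hq]; ring
        have hx₀1 : 1 ≤ x₀ := by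
          have := Int.emod_nonneg (X - 1) (ne_of_gt ha0)
          omega
        have hx₀a : x₀ ≤ a := by
          have := Int.emod_lt_of_pos (X - 1) ha0
          omega
        have heq₀ : b * x₀ - a * y₀ = s := by
          rw [hx₀, hy₀]
          linear_combination hkey
        have hy₀b : y₀ < b := by nlinarith
        rcases lt_or_ge y₀ 0 with hneg | hpos
        · have := sol_bad a b d s x₀ y₀ ha0 hb0 hd0 hco hx₀1 hx₀a hneg heq₀
          omega
        · refine hno (x₀, y₀) ?_ (by rw [heq₀])
          simp only [Dgt, mem_filter, mem_product, mem_Icc]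
          refine ⟨⟨⟨by omega, hx₀a⟩, hpos, le_of_lt hy₀b⟩, by nlinarith⟩
      obtain ⟨p, hp, hps⟩ := hsmall
      exact ⟨p, hp, hps⟩
    · rintro ⟨⟨x, y⟩, hp, rfl⟩
      simp only [Dgt, mem_filter, mem_product, mem_Icc] at hp
      obtain ⟨⟨⟨hx0, hxa⟩, hy0, hyb⟩, hlt⟩ := hp
      have hs1 : 1 ≤ b * x - a * y := by omega
      have hx1 : 1 ≤ x := by nlinarith
      have hyb' : y < b := by nlinarith
      have hs2 : b * x - a * y ≤ a * b := by nlinarith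
      have hub : d * (b * x - a * y) ≤ d * a * (d * b) := by
        have h1 : d * (b * x - a * y) ≤ d * (a * b) := mul_le_mul_of_nonneg_left hs2 hd0.le
        have h2 : (0:ℤ) ≤ (d - 1) * (d * (a * b)) :=
          mul_nonneg (by linarith) (by positivity)
        nlinarith [h1, h2]
      refine ⟨⟨by nlinarith, hub⟩, Dvd.intro _ rfl, ?_⟩
      exact sol_good_card a b d (b*x - a*y) x y ha0 hb0 hd0 hco hx1 hxa hy0 hyb' rfl
  rw [hset]
  rw [Finset.card_image_of_injOn (f_injOn a b d ha0 hb0 hd0 hco)]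
  have hD := Dgt_card a b ha0 hb0 hco
  have hnum : d*a * (d*b) + (d*a + d*b) * d - d^2 = (2 * d^2) * ((Dgt a b).card : ℤ) := by
    linear_combination (-(d^2)) * hD
  rw [hnum, Int.mul_ediv_cancel_left _ (by positivity)]
end

section
/- Let m, n be positive integers with d = gcd(m, n). The number of integers r with 0 ≤ r ≤ m·n such that the equation n·x − m·y = r has at least one integer solution (x, y) with 0 ≤ x ≤ m and 0 ≤ y ≤ n equals (d² + m·n·(2d − 1) + d·(m + n))/(2·d²). -/
theorem stmt_9 (m n : ℤ) (hm : 0 < m) (hn : 0 < n)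
    (d : ℤ) (hd : d = Int.gcd m n) :
    (((Finset.Icc (0:ℤ) (m * n)).filter (fun r =>
      ∃ p ∈ Finset.Icc (0:ℤ) m ×ˢ Finset.Icc (0:ℤ) n,
        n * p.1 - m * p.2 = r)).card : ℤ)
      = (d ^ 2 + m * n * (2 * d - 1) + d * (m + n)) / (2 * d ^ 2) := by
  classical
  have hdm : d ∣ m := hd ▸ Int.gcd_dvd_left m n
  have hdn : d ∣ n := hd ▸ Int.gcd_dvd_right m n
  have hgcd0 : 0 < Int.gcd m n := by
    rcases Nat.eq_zero_or_pos (Int.gcd m n) with h | h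
    · rw [Int.gcd_eq_zero_iff] at h; omega
    · exact h
  have hd0 : 0 < d := by rw [hd]; exact_mod_cast hgcd0
  have hab' : Int.gcd (m / d) (n / d) = 1 := by
    rw [hd]; exact Int.gcd_div_gcd_div_gcd hgcd0
  obtain ⟨a, hma⟩ := hdm
  obtain ⟨b, hmb⟩ := hdn
  have haq : m / d = a := by rw [hma]; exact Int.mul_ediv_cancel_left a hd0.ne'
  have hbq : n / d = b := by rw [hmb]; exact Int.mul_ediv_cancel_left b hd0.ne'
  have hab : IsCoprime a b := by
    rw [Int.isCoprime_iff_gcd_eq_one, ← haq, ← hbq]; exact hab'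
  subst hma hmb
  have ha0 : 0 < a := by nlinarith
  have hb0 : 0 < b := by nlinarith
  clear hd hgcd0 hab' haq hbq hm hn
  set G : Finset (ℤ × ℤ) := Finset.Icc (0:ℤ) (d*a) ×ˢ Finset.Icc (0:ℤ) (d*b) with hG
  set f : ℤ × ℤ → ℤ := fun p => (d*b) * p.1 - (d*a) * p.2 with hf
  set S : Finset ℤ := G.image f with hS
  set R : Finset (ℤ × ℤ) := G.filter (fun p => p.1 < a ∨ p.2 < b) with hR
  have hmemG : ∀ p : ℤ × ℤ, p ∈ G ↔ (0 ≤ p.1 ∧ p.1 ≤ d*a) ∧ (0 ≤ p.2 ∧ p.2 ≤ d*b) := by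
    intro p; simp [hG, Finset.mem_product, Finset.mem_Icc]
  -- Step A : S = R.image f
  have himg : S = R.image f := by
    apply Finset.Subset.antisymm
    · intro r hr
      rw [hS, Finset.mem_image] at hr
      obtain ⟨⟨x, y⟩, hp, rfl⟩ := hr
      rw [hmemG] at hp
      obtain ⟨⟨hx0, hxm⟩, hy0, hyn⟩ := hp
      set k : ℤ := min (x / a) (y / b) with hk
      have hk0 : 0 ≤ k := le_min (Int.ediv_nonneg hx0 ha0.le) (Int.ediv_nonneg hy0 hb0.le)
      have hxdiv : a * (x / a) = x - x % a := by rw [Int.emod_def]; ring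
      have hydiv : b * (y / b) = y - y % b := by rw [Int.emod_def]; ring
      have hxr0 : 0 ≤ x % a := Int.emod_nonneg x ha0.ne'
      have hxr1 : x % a < a := Int.emod_lt_of_pos x ha0
      have hyr0 : 0 ≤ y % b := Int.emod_nonneg y hb0.ne'
      have hyr1 : y % b < b := Int.emod_lt_of_pos y hb0
      have hkx : k ≤ x / a := min_le_left _ _
      have hky : k ≤ y / b := min_le_right _ _
      have hax : a * k ≤ x := by nlinarith
      have hby : b * k ≤ y := by nlinarith
      simp only at hx0 hxm hy0 hyn
      have hak : 0 ≤ a * k := mul_nonneg ha0.le hk0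
      have hbk : 0 ≤ b * k := mul_nonneg hb0.le hk0
      rw [Finset.mem_image]
      refine ⟨(x - a*k, y - b*k), ?_, ?_⟩
      · rw [hR, Finset.mem_filter, hmemG]
        dsimp only
        refine ⟨⟨⟨by linarith, by linarith⟩, by linarith, by linarith⟩, ?_⟩
        rcases le_total (x / a) (y / b) with h | h
        · left
          have hke : k = x / a := min_eq_left h
          have h5 : x - a*k = x % a := by rw [hke]; linarith [hxdiv]
          linarith
        · right
          have hke : k = y / b := min_eq_right h
          have h5 : y - b*k = y % b := by rw [hke]; linarith [hydiv]
          linarith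
      · simp only [hf]; ring
    · rw [hS]
      exact Finset.image_subset_image (Finset.filter_subset _ _)
  -- Step B : f is injective on R
  have hinj : Set.InjOn f R := by
    intro p hp q hq hpq
    rw [Finset.mem_coe, hR, Finset.mem_filter, hmemG] at hp hq
    obtain ⟨⟨⟨hp10, hp1m⟩, hp20, hp2n⟩, hpmin⟩ := hp
    obtain ⟨⟨⟨hq10, hq1m⟩, hq20, hq2n⟩, hqmin⟩ := hq
    simp only [hf] at hpq
    have h1 : b * (p.1 - q.1) = a * (p.2 - q.2) := by
      apply mul_left_cancel₀ hd0.ne'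
      linear_combination hpq
    have h2 : a ∣ p.1 - q.1 :=
      hab.dvd_of_dvd_mul_left (h1 ▸ Dvd.intro _ rfl)
    obtain ⟨k, hk⟩ := h2
    have h3 : p.2 - q.2 = b * k := by
      apply mul_left_cancel₀ ha0.ne'
      linear_combination b * hk - h1
    rcases lt_trichotomy k 0 with hlt | heq | hgt
    · exfalso
      have hk1 : k ≤ -1 := by omega
      rcases hqmin with h | h
      · nlinarith
      · nlinarith
    · rw [heq, mul_zero] at hk h3
      exact Prod.ext (by omega) (by omega)
    · exfalso
      have hk1 : 1 ≤ k := hgt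
      rcases hpmin with h | h
      · nlinarith
      · nlinarith
  -- cardinality of S
  have hcardR : S.card = R.card := by
    rw [himg]; exact Finset.card_image_of_injOn hinj
  have hT : G.filter (fun p => ¬(p.1 < a ∨ p.2 < b)) =
      Finset.Icc a (d*a) ×ˢ Finset.Icc b (d*b) := by
    ext ⟨x, y⟩
    simp only [Finset.mem_filter, hmemG, Finset.mem_product, Finset.mem_Icc, not_or, not_lt]
    constructor
    · rintro ⟨⟨⟨_, h2⟩, _, h4⟩, h5, h6⟩; exact ⟨⟨h5, h2⟩, h6, h4⟩
    · rintro ⟨⟨h1, h2⟩, h3, h4⟩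
      exact ⟨⟨⟨by linarith, h2⟩, by linarith, h4⟩, h1, h3⟩
  have hcards : R.card + (Finset.Icc a (d*a) ×ˢ Finset.Icc b (d*b)).card = G.card := by
    rw [← hT, hR]
    exact Finset.card_filter_add_card_filter_not _
  have hGcard : (G.card : ℤ) = (d*a+1) * (d*b+1) := by
    rw [hG, Finset.card_product, Int.card_Icc, Int.card_Icc]
    push_cast [Int.toNat_of_nonneg (show (0:ℤ) ≤ d*a + 1 - 0 by nlinarith),
      Int.toNat_of_nonneg (show (0:ℤ) ≤ d*b + 1 - 0 by nlinarith)]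
    ring
  have hTcard : ((Finset.Icc a (d*a) ×ˢ Finset.Icc b (d*b)).card : ℤ)
      = (d*a+1-a) * (d*b+1-b) := by
    rw [Finset.card_product, Int.card_Icc, Int.card_Icc]
    push_cast [Int.toNat_of_nonneg (show (0:ℤ) ≤ d*a + 1 - a by nlinarith),
      Int.toNat_of_nonneg (show (0:ℤ) ≤ d*b + 1 - b by nlinarith)]
    ring
  have hScard : (S.card : ℤ) = (d*a+1) * (d*b+1) - (d*a+1-a) * (d*b+1-b) := by
    have := congrArg (Nat.cast : ℕ → ℤ) hcards
    push_cast at this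
    rw [hcardR]
    rw [hGcard] at this
    rw [hTcard] at this
    linarith
  -- symmetry
  have hzero : (0:ℤ) ∈ S := by
    rw [hS, Finset.mem_image]
    refine ⟨(0,0), ?_, by simp [hf]⟩
    rw [hmemG]; constructor <;> constructor <;> simp <;> nlinarith
  have hneg : ∀ r ∈ S, -r ∈ S := by
    intro r hr
    rw [hS, Finset.mem_image] at hr ⊢
    obtain ⟨⟨x, y⟩, hp, rfl⟩ := hr
    rw [hmemG] at hp
    obtain ⟨⟨h1, h2⟩, h3, h4⟩ := hp
    simp only at h1 h2 h3 h4
    refine ⟨(d*a - x, d*b - y), ?_, ?_⟩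
    · rw [hmemG]
      dsimp only
      exact ⟨⟨by linarith, by linarith⟩, by linarith, by linarith⟩
    · simp only [hf]; ring
  set A : Finset ℤ := S.filter (fun r => 0 ≤ r) with hA
  set B : Finset ℤ := S.filter (fun r => r ≤ 0) with hB
  have hABcard : A.card = B.card :=
    Finset.card_bij' (fun r _ => -r) (fun r _ => -r)
      (fun r hr => by
        rw [hA, Finset.mem_filter] at hr
        rw [hB, Finset.mem_filter]
        exact ⟨hneg r hr.1, neg_nonpos.mpr hr.2⟩)
      (fun r hr => by
        rw [hB, Finset.mem_filter] at hr
        rw [hA, Finset.mem_filter]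
        exact ⟨hneg r hr.1, neg_nonneg.mpr hr.2⟩)
      (fun r _ => neg_neg r) (fun r _ => neg_neg r)
  have hunion : A ∪ B = S := by
    ext r
    simp only [hA, hB, Finset.mem_union, Finset.mem_filter]
    constructor
    · rintro (⟨h, _⟩ | ⟨h, _⟩) <;> exact h
    · intro h
      rcases le_total 0 r with h' | h'
      · exact Or.inl ⟨h, h'⟩
      · exact Or.inr ⟨h, h'⟩
  have hinter : A ∩ B = {0} := by
    ext r
    simp only [hA, hB, Finset.mem_inter, Finset.mem_filter, Finset.mem_singleton]
    constructor
    · rintro ⟨⟨_, h1⟩, _, h2⟩; omega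
    · rintro rfl; exact ⟨⟨hzero, le_refl 0⟩, hzero, le_refl 0⟩
  have h2A : (S.card : ℤ) + 1 = 2 * A.card := by
    have := Finset.card_union_add_card_inter A B
    rw [hunion, hinter, hABcard] at this
    simp at this
    omega
  -- the statement's set equals A
  have hkey : (Finset.Icc (0:ℤ) (d*a * (d*b))).filter (fun r =>
      ∃ p ∈ Finset.Icc (0:ℤ) (d*a) ×ˢ Finset.Icc (0:ℤ) (d*b),
        (d*b) * p.1 - (d*a) * p.2 = r) = A := by
    ext r
    simp only [hA, Finset.mem_filter, Finset.mem_Icc, hS, Finset.mem_image]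
    constructor
    · rintro ⟨⟨h0, h1⟩, p, hp, hfp⟩
      exact ⟨⟨p, hp, hfp⟩, h0⟩
    · rintro ⟨⟨p, hp, hfp⟩, h0⟩
      refine ⟨⟨h0, ?_⟩, p, hp, hfp⟩
      rw [hmemG] at hp
      obtain ⟨⟨h1, h2⟩, h3, h4⟩ := hp
      have : f p = (d*b) * p.1 - (d*a) * p.2 := rfl
      rw [this] at hfp
      nlinarith
  rw [hkey]
  -- final arithmetic
  have h2N : 2 * (A.card : ℤ) = a*b*(2*d-1) + a + b + 1 := by
    rw [← h2A, hScard]; ring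
  have hnum : d^2 + (d*a) * (d*b) * (2*d-1) + d*(d*a + d*b) = d^2 * (2 * (A.card : ℤ)) := by
    rw [h2N]; ring
  rw [hnum, show 2*d^2 = d^2 * 2 by ring, Int.mul_ediv_mul_of_pos _ _ (by positivity)]
  rw [Int.mul_ediv_cancel_left _ (by norm_num : (2:ℤ) ≠ 0)]
end

section
/- Let m, n be coprime positive integers. Then the number of integers r with 0 ≤ r ≤ m·n such that n·x − m·y = r has a lattice-point solution with 0 ≤ x ≤ m, 0 ≤ y ≤ n equals (m·n + m + n + 1)/2. -/
theorem stmt_10 (m n : ℤ) (hm : 0 < m) (hn : 0 < n) (hcop : IsCoprime m n) :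
    (((Finset.Icc (0:ℤ) (m * n)).filter (fun r =>
      ∃ p ∈ Finset.Icc (0:ℤ) m ×ˢ Finset.Icc (0:ℤ) n,
        n * p.1 - m * p.2 = r)).card : ℤ)
      = (m * n + m + n + 1) / 2 := by
  classical
  set P : Finset (ℤ × ℤ) := Finset.Icc (0:ℤ) m ×ˢ Finset.Icc (0:ℤ) n with hP
  set f : ℤ × ℤ → ℤ := fun p => n * p.1 - m * p.2 with hf
  set T : Finset ℤ := P.image f with hT
  have hPmem : ∀ p : ℤ × ℤ, p ∈ P ↔ 0 ≤ p.1 ∧ p.1 ≤ m ∧ 0 ≤ p.2 ∧ p.2 ≤ n := by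
    intro p
    simp [hP, Finset.mem_product, Finset.mem_Icc, and_assoc]
  have hTbound : ∀ r ∈ T, r ≤ m * n := by
    intro r hr
    simp only [hT, Finset.mem_image] at hr
    obtain ⟨p, hp, rfl⟩ := hr
    rw [hPmem] at hp
    obtain ⟨h1, h2, h3, h4⟩ := hp
    simp only [hf]
    nlinarith
  have h0T : (0:ℤ) ∈ T := by
    simp only [hT, Finset.mem_image]
    refine ⟨(0, 0), ?_, by simp [hf]⟩
    rw [hPmem]
    exact ⟨le_refl 0, le_of_lt hm, le_refl 0, le_of_lt hn⟩
  -- Step 1: the filtered set equals the nonnegative part of T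
  have hstep1 : (Finset.Icc (0:ℤ) (m * n)).filter (fun r =>
      ∃ p ∈ P, n * p.1 - m * p.2 = r) = T.filter (fun r => 0 ≤ r) := by
    ext r
    simp only [Finset.mem_filter, Finset.mem_Icc, hT, Finset.mem_image]
    constructor
    · rintro ⟨⟨h0, h1⟩, p, hp, hfp⟩
      exact ⟨⟨p, hp, hfp⟩, h0⟩
    · rintro ⟨⟨p, hp, hfp⟩, h0⟩
      refine ⟨⟨h0, ?_⟩, p, hp, hfp⟩
      have := hTbound r (by simp only [hT, Finset.mem_image]; exact ⟨p, hp, hfp⟩)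
      exact this
  -- coprimality divisibility
  have hdvd : ∀ a b : ℤ, n * a = m * b → m ∣ a := by
    intro a b h
    exact hcop.dvd_of_dvd_mul_left ⟨b, h⟩
  -- injectivity on P minus (m,n)
  have hinj : ∀ p ∈ P.erase (m, n), ∀ q ∈ P.erase (m, n), f p = f q → p = q := by
    intro p hp q hq hfpq
    rw [Finset.mem_erase] at hp hq
    obtain ⟨hpne, hp⟩ := hp
    obtain ⟨hqne, hq⟩ := hq
    rw [hPmem] at hp hq
    obtain ⟨hp1, hp2, hp3, hp4⟩ := hp
    obtain ⟨hq1, hq2, hq3, hq4⟩ := hq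
    simp only [hf] at hfpq
    have heq : n * (p.1 - q.1) = m * (p.2 - q.2) := by ring_nf; linarith
    obtain ⟨k, hk⟩ := hdvd _ _ heq
    have hk1 : -1 ≤ k := by nlinarith
    have hk2 : k ≤ 1 := by nlinarith
    interval_cases k
    · -- p.1 - q.1 = -m : forces q = (m, n)
      exfalso
      apply hqne
      have hq1' : q.1 = m := by omega
      have h5 : m * (p.2 - q.2) = m * (-n) := by
        rw [← heq, hk]; ring
      have h6 : p.2 - q.2 = -n := mul_left_cancel₀ (ne_of_gt hm) h5
      have hq2' : q.2 = n := by omega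
      have : q = (q.1, q.2) := rfl
      rw [this, hq1', hq2']
    · -- p.1 = q.1
      have hp1' : p.1 = q.1 := by omega
      have h5 : m * (p.2 - q.2) = m * 0 := by
        rw [← heq, hk]; ring
      have h6 : p.2 - q.2 = 0 := mul_left_cancel₀ (ne_of_gt hm) h5
      have hp2' : p.2 = q.2 := by omega
      exact Prod.ext hp1' hp2'
    · -- p.1 - q.1 = m : forces p = (m, n)
      exfalso
      apply hpne
      have hp1' : p.1 = m := by omega
      have h5 : m * (p.2 - q.2) = m * n := by
        rw [← heq, hk]; ring
      have h6 : p.2 - q.2 = n := mul_left_cancel₀ (ne_of_gt hm) h5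
      have hp2' : p.2 = n := by omega
      have : p = (p.1, p.2) := rfl
      rw [this, hp1', hp2']
  have hmnP : ((m, n) : ℤ × ℤ) ∈ P := by
    rw [hPmem]; exact ⟨le_of_lt hm, le_refl m, le_of_lt hn, le_refl n⟩
  have h00 : ((0, 0) : ℤ × ℤ) ∈ P.erase (m, n) := by
    rw [Finset.mem_erase]
    constructor
    · intro h
      rw [Prod.ext_iff] at h
      exact absurd h.1.symm (ne_of_gt hm)
    · rw [hPmem]; exact ⟨le_refl 0, le_of_lt hm, le_refl 0, le_of_lt hn⟩
  have hTeq : T = (P.erase (m, n)).image f := by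
    apply Finset.Subset.antisymm
    · intro r hr
      simp only [hT, Finset.mem_image] at hr ⊢
      obtain ⟨p, hp, rfl⟩ := hr
      by_cases hpmn : p = (m, n)
      · refine ⟨(0, 0), h00, ?_⟩
        subst hpmn
        simp only [hf]
        ring
      · exact ⟨p, Finset.mem_erase.mpr ⟨hpmn, hp⟩, rfl⟩
    · exact Finset.image_subset_image (Finset.erase_subset _ _)
  -- card of T
  have hcardT : (T.card : ℤ) = m * n + m + n := by
    rw [hTeq, Finset.card_image_of_injOn
      (fun p hp q hq h => hinj p (Finset.mem_coe.mp hp) q (Finset.mem_coe.mp hq) h)]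
    rw [Finset.card_erase_of_mem hmnP]
    rw [hP, Finset.card_product, Int.card_Icc, Int.card_Icc]
    have hA : ((m + 1 - 0).toNat : ℤ) = m + 1 := by
      rw [Int.toNat_of_nonneg (by omega)]; ring
    have hB : ((n + 1 - 0).toNat : ℤ) = n + 1 := by
      rw [Int.toNat_of_nonneg (by omega)]; ring
    have h1 : 1 ≤ (m + 1 - 0).toNat * (n + 1 - 0).toNat := by
      have : (1:ℤ) ≤ ((m + 1 - 0).toNat * (n + 1 - 0).toNat : ℕ) := by
        push_cast [hA, hB]; nlinarith
      exact_mod_cast this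
    push_cast [Nat.cast_sub h1, hA, hB]
    ring
  -- symmetry
  have hnegT : ∀ r ∈ T, -r ∈ T := by
    intro r hr
    simp only [hT, Finset.mem_image] at hr ⊢
    obtain ⟨p, hp, rfl⟩ := hr
    rw [hPmem] at hp
    obtain ⟨h1, h2, h3, h4⟩ := hp
    refine ⟨(m - p.1, n - p.2), ?_, ?_⟩
    · rw [hPmem]
      exact ⟨by omega, by omega, by omega, by omega⟩
    · simp only [hf]; ring
  have himg : (T.filter (fun r => 0 < r)).image (fun r => -r)
      = T.filter (fun r => r < 0) := by
    ext r
    simp only [Finset.mem_image, Finset.mem_filter]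
    constructor
    · rintro ⟨s, ⟨hsT, hs⟩, rfl⟩
      exact ⟨hnegT s hsT, by linarith⟩
    · rintro ⟨hrT, hr⟩
      exact ⟨-r, ⟨hnegT r hrT, by linarith⟩, by ring⟩
  have hposneg : (T.filter (fun r => 0 < r)).card = (T.filter (fun r => r < 0)).card := by
    rw [← himg, Finset.card_image_of_injective _ neg_injective]
  -- split T by sign
  have hsplit : (T.filter (fun r => 0 < r)).card
      + (T.filter (fun r => ¬ 0 < r)).card = T.card :=
    Finset.card_filter_add_card_filter_not _
  have hB : T.filter (fun r => ¬ 0 < r) = insert 0 (T.filter (fun r => r < 0)) := by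
    ext r
    simp only [Finset.mem_insert, Finset.mem_filter, not_lt]
    constructor
    · rintro ⟨hrT, hr⟩
      rcases eq_or_lt_of_le hr with h | h
      · exact Or.inl h
      · exact Or.inr ⟨hrT, h⟩
    · rintro (rfl | ⟨hrT, hr⟩)
      · exact ⟨h0T, le_refl 0⟩
      · exact ⟨hrT, le_of_lt hr⟩
  have hA2 : T.filter (fun r => 0 ≤ r) = insert 0 (T.filter (fun r => 0 < r)) := by
    ext r
    simp only [Finset.mem_insert, Finset.mem_filter]
    constructor
    · rintro ⟨hrT, hr⟩
      rcases eq_or_lt_of_le hr with h | h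
      · exact Or.inl h.symm
      · exact Or.inr ⟨hrT, h⟩
    · rintro (rfl | ⟨hrT, hr⟩)
      · exact ⟨h0T, le_refl 0⟩
      · exact ⟨hrT, le_of_lt hr⟩
  have h0notpos : (0:ℤ) ∉ T.filter (fun r => 0 < r) := by
    simp [Finset.mem_filter]
  have h0notneg : (0:ℤ) ∉ T.filter (fun r => r < 0) := by
    simp [Finset.mem_filter]
  have hcardB : (T.filter (fun r => ¬ 0 < r)).card
      = (T.filter (fun r => r < 0)).card + 1 := by
    rw [hB, Finset.card_insert_of_notMem h0notneg]
  have hcardA : (T.filter (fun r => 0 ≤ r)).card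
      = (T.filter (fun r => 0 < r)).card + 1 := by
    rw [hA2, Finset.card_insert_of_notMem h0notpos]
  rw [hstep1, hcardA]
  set k := (T.filter (fun r => 0 < r)).card with hk
  have hTk : T.card = 2 * k + 1 := by omega
  have : (m * n + m + n : ℤ) = 2 * (k : ℤ) + 1 := by
    rw [← hcardT, hTk]; push_cast; ring
  omega
end

section
/- Let m, n be positive integers with d = gcd(m, n). The number of lattice points (x, y) with 0 ≤ x ≤ m, 0 ≤ y ≤ n, and n·x − m·y > 0 equals ((n+1)·(m+1) − (d+1))/2. -/
theorem stmt_11 (m n : ℤ) (hm : 0 < m) (hn : 0 < n)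
    (d : ℤ) (hd : d = Int.gcd m n) :
    (((Finset.Icc (0:ℤ) m ×ˢ Finset.Icc (0:ℤ) n).filter
      (fun p => 0 < n * p.1 - m * p.2)).card : ℤ)
      = ((n + 1) * (m + 1) - (d + 1)) / 2 := by
  classical
  set S := Finset.Icc (0:ℤ) m ×ˢ Finset.Icc (0:ℤ) n with hS
  set A := S.filter (fun p => 0 < n * p.1 - m * p.2) with hA
  set B := S.filter (fun p => n * p.1 - m * p.2 < 0) with hB
  set C := S.filter (fun p => n * p.1 - m * p.2 = 0) with hC
  have hd0 : 0 < d := by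
    rw [hd]
    exact_mod_cast Int.gcd_pos_iff.mpr (Or.inl hm.ne')
  have hdm : d ∣ m := hd ▸ Int.gcd_dvd_left m n
  have hdn : d ∣ n := hd ▸ Int.gcd_dvd_right m n
  set m' := m / d with hm'
  set n' := n / d with hn'
  have hmm : d * m' = m := Int.mul_ediv_cancel' hdm
  have hnn : d * n' = n := Int.mul_ediv_cancel' hdn
  have hm'0 : 0 < m' := by nlinarith [hmm]
  have hn'0 : 0 < n' := by nlinarith [hnn]
  have cop : IsCoprime m' n' := by
    rw [Int.isCoprime_iff_gcd_eq_one, hm', hn', hd]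
    exact Int.gcd_div_gcd_div_gcd (by exact_mod_cast hd ▸ hd0)
  -- membership in S
  have hmemS : ∀ p : ℤ × ℤ, p ∈ S ↔ (0 ≤ p.1 ∧ p.1 ≤ m ∧ 0 ≤ p.2 ∧ p.2 ≤ n) := by
    intro p
    simp [hS, Finset.mem_product, Finset.mem_Icc]
    tauto
  -- card A = card B
  have hAB : A.card = B.card := by
    apply Finset.card_bij' (fun p _ => (m - p.1, n - p.2)) (fun p _ => (m - p.1, n - p.2))
    · intro p hp
      simp only [hA, Finset.mem_filter] at hp
      simp only [hB, Finset.mem_filter]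
      rw [hmemS] at hp ⊢
      constructor
      · simp; omega
      · simp; nlinarith [hp.2]
    · intro p hp
      simp only [hB, Finset.mem_filter] at hp
      simp only [hA, Finset.mem_filter]
      rw [hmemS] at hp ⊢
      constructor
      · simp; omega
      · simp; nlinarith [hp.2]
    · intro p hp; simp
    · intro p hp; simp
  -- card C = d + 1
  have hCeq : C = (Finset.Icc (0:ℤ) d).image (fun t => (m' * t, n' * t)) := by
    ext p
    simp only [hC, Finset.mem_filter, Finset.mem_image, Finset.mem_Icc, hmemS]
    constructor
    · rintro ⟨⟨hx0, hxm, hy0, hyn⟩, he⟩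
      have he' : n' * p.1 = m' * p.2 := by
        have : d * (n' * p.1) = d * (m' * p.2) := by nlinarith [hmm, hnn]
        exact mul_left_cancel₀ hd0.ne' this
      have hdvd : m' ∣ p.1 := cop.dvd_of_dvd_mul_left ⟨p.2, he'.symm ▸ rfl⟩
      obtain ⟨t, ht⟩ := hdvd
      have hy : p.2 = n' * t := by
        have : m' * (n' * t) = m' * p.2 := by rw [← he', ht]; ring
        exact (mul_left_cancel₀ hm'0.ne' this).symm
      refine ⟨t, ⟨?_, ?_⟩, ?_⟩
      · nlinarith [ht ▸ hx0]
      · nlinarith [ht ▸ hxm, hmm]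
      · rw [Prod.ext_iff]; exact ⟨by simp [ht], by simp [hy]⟩
    · rintro ⟨t, ⟨ht0, htd⟩, rfl⟩
      have h1 : 0 ≤ m' * t := by positivity
      have h2 : m' * t ≤ m := by nlinarith [mul_nonneg hm'0.le (sub_nonneg.mpr htd)]
      have h3 : 0 ≤ n' * t := by positivity
      have h4 : n' * t ≤ n := by nlinarith [mul_nonneg hn'0.le (sub_nonneg.mpr htd)]
      have h5 : n * (m' * t) - m * (n' * t) = 0 := by rw [← hmm, ← hnn]; ring
      exact ⟨⟨h1, h2, h3, h4⟩, h5⟩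
  have hCcard : (C.card : ℤ) = d + 1 := by
    rw [hCeq, Finset.card_image_of_injective _ (fun a b hab => by
      have := (Prod.ext_iff.mp hab).1
      exact mul_left_cancel₀ hm'0.ne' this)]
    rw [Int.card_Icc]
    simp
    omega
  -- partition
  have hdisjAB : Disjoint A B := by
    rw [Finset.disjoint_left]
    intro p hp1 hp2
    simp only [hA, hB, Finset.mem_filter] at hp1 hp2
    omega
  have hdisjABC : Disjoint (A ∪ B) C := by
    rw [Finset.disjoint_left]
    intro p hp1 hp2
    simp only [hA, hB, hC, Finset.mem_filter, Finset.mem_union] at hp1 hp2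
    omega
  have hunion : A ∪ B ∪ C = S := by
    ext p
    simp only [hA, hB, hC, Finset.mem_filter, Finset.mem_union]
    constructor
    · rintro ((⟨h, _⟩ | ⟨h, _⟩) | ⟨h, _⟩) <;> exact h
    · intro h
      rcases lt_trichotomy (n * p.1 - m * p.2) 0 with h1 | h1 | h1
      · exact Or.inl (Or.inr ⟨h, h1⟩)
      · exact Or.inr ⟨h, h1⟩
      · exact Or.inl (Or.inl ⟨h, h1⟩)
  have hScard : (S.card : ℤ) = (m + 1) * (n + 1) := by
    rw [hS, Finset.card_product, Int.card_Icc, Int.card_Icc]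
    push_cast
    rw [Int.toNat_of_nonneg (by omega), Int.toNat_of_nonneg (by omega)]
    ring
  have hsum : (A.card : ℤ) + B.card + C.card = (m + 1) * (n + 1) := by
    rw [← hScard, ← hunion, Finset.card_union_of_disjoint hdisjABC,
      Finset.card_union_of_disjoint hdisjAB]
    push_cast
    ring
  have h2 : (A.card : ℤ) * 2 = (n + 1) * (m + 1) - (d + 1) := by
    have hABz : (A.card : ℤ) = B.card := by exact_mod_cast hAB
    nlinarith [hsum, hCcard]
  obtain ⟨k, hk⟩ : ∃ k : ℤ, (n + 1) * (m + 1) = k := ⟨_, rfl⟩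
  rw [hk] at h2 ⊢
  omega
end

section
/- The exponential generating function of the ordered Bell numbers satisfies Σ_{n≥0} B(n)·tⁿ/n! = 1/(2 − exp(t)), as an identity of formal power series. -/
open Finset

private def obP {n : ℕ} (L : List (Finset (Fin n))) (T : Finset (Fin n)) : Prop :=
  L.Pairwise (fun S T => Disjoint S T) ∧ (∀ S ∈ L, S.Nonempty) ∧
    L.foldr (· ∪ ·) ∅ = T

private def obb : ℕ → ℕ
  | 0 => 1
  | m + 1 => ∑ k ∈ Finset.range (m + 1), (m + 1).choose (k + 1) * obb (m - k)
decreasing_by exact Nat.lt_succ_of_le (Nat.sub_le m k)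

private lemma mem_subset_foldr {n : ℕ} {L : List (Finset (Fin n))} {S : Finset (Fin n)}
    (h : S ∈ L) : S ⊆ L.foldr (· ∪ ·) ∅ := by
  induction L with
  | nil => simp at h
  | cons a l ih =>
    rcases List.mem_cons.1 h with rfl | h
    · exact subset_union_left
    · exact (ih h).trans subset_union_right

private lemma disjoint_foldr {n : ℕ} {L : List (Finset (Fin n))} {S : Finset (Fin n)}
    (h : ∀ x ∈ L, Disjoint S x) : Disjoint S (L.foldr (· ∪ ·) ∅) := by
  induction L with
  | nil => simp
  | cons a l ih =>
    simp only [List.foldr_cons, disjoint_union_right]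
    exact ⟨h a (by simp), ih fun x hx => h x (by simp [hx])⟩

private noncomputable def obEquiv {n : ℕ} (T : Finset (Fin n)) (hT : T.Nonempty) :
    (Σ S : {S : Finset (Fin n) // S ⊆ T ∧ S.Nonempty}, {L // obP L (T \ S.1)}) ≃
      {L // obP L T} := by
  refine Equiv.ofBijective
    (fun x => ⟨x.1.1 :: x.2.1, ?_, ?_, ?_⟩) ⟨?_, ?_⟩
  · refine List.pairwise_cons.2 ⟨fun U hU => ?_, x.2.2.1⟩
    have : U ⊆ T \ x.1.1 := x.2.2.2.2 ▸ mem_subset_foldr hU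
    exact (Finset.disjoint_sdiff.mono_right this)
  · intro S hS
    rcases List.mem_cons.1 hS with h | h
    · exact h ▸ x.1.2.2
    · exact x.2.2.2.1 S h
  · simp only [List.foldr_cons, x.2.2.2.2]
    exact Finset.union_sdiff_of_subset x.1.2.1
  · rintro ⟨⟨S₁, h₁⟩, ⟨L₁, hL₁⟩⟩ ⟨⟨S₂, h₂⟩, ⟨L₂, hL₂⟩⟩ h
    simp only [Subtype.mk.injEq, List.cons.injEq] at h
    obtain ⟨rfl, rfl⟩ := h
    rfl
  · rintro ⟨L, hpw, hne, hfold⟩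
    cases L with
    | nil =>
      exfalso
      rw [List.foldr_nil] at hfold
      exact hT.ne_empty hfold.symm
    | cons S L' =>
      have hSsub : S ⊆ T := hfold ▸ mem_subset_foldr (by simp)
      have hdisj : Disjoint S (L'.foldr (· ∪ ·) ∅) :=
        disjoint_foldr (List.pairwise_cons.1 hpw).1
      have hfold' : L'.foldr (· ∪ ·) ∅ = T \ S := by
        rw [← hfold]
        simp only [List.foldr_cons]
        exact (Finset.union_sdiff_cancel_left hdisj).symm
      exact ⟨⟨⟨S, hSsub, hne S (by simp)⟩,
        ⟨L', (List.pairwise_cons.1 hpw).2, fun U hU => hne U (by simp [hU]), hfold'⟩⟩, rfl⟩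

private lemma ob_key {n : ℕ} : ∀ m : ℕ, ∀ T : Finset (Fin n), T.card = m →
    Finite {L // obP L T} ∧ Nat.card {L // obP L T} = obb m := by
  intro m
  induction m using Nat.strong_induction_on with
  | _ m ih =>
  intro T hT
  rcases Nat.eq_zero_or_pos m with rfl | hm
  · have hTe : T = ∅ := card_eq_zero.1 hT
    subst hTe
    have hU : ∀ L : {L // obP L (∅ : Finset (Fin n))}, L = ⟨[], by simp [obP]⟩ := by
      rintro ⟨L, hpw, hne, hfold⟩
      cases L with
      | nil => rfl
      | cons S L' =>
        exfalso
        have : S ⊆ (∅ : Finset (Fin n)) := hfold ▸ mem_subset_foldr (by simp)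
        exact (hne S (by simp)).ne_empty (subset_empty.1 this)
    haveI : Unique {L // obP L (∅ : Finset (Fin n))} :=
      ⟨⟨⟨[], by simp [obP]⟩⟩, hU⟩
    exact ⟨inferInstance, by simp [obb]⟩
  · have hTne : T.Nonempty := card_pos.1 (hT ▸ hm)
    have hfib : ∀ S : {S : Finset (Fin n) // S ⊆ T ∧ S.Nonempty},
        Finite {L // obP L (T \ S.1)} ∧
          Nat.card {L // obP L (T \ S.1)} = obb (m - S.1.card) := by
      rintro ⟨S, hST, hSne⟩
      have hcard : (T \ S).card = m - S.card := by
        rw [card_sdiff_of_subset hST, hT]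
      have hlt : m - S.card < m :=
        Nat.sub_lt hm (card_pos.2 hSne)
      exact ih _ hlt _ hcard
    haveI : ∀ S : {S : Finset (Fin n) // S ⊆ T ∧ S.Nonempty},
        Finite {L // obP L (T \ S.1)} := fun S => (hfib S).1
    haveI : ∀ S : {S : Finset (Fin n) // S ⊆ T ∧ S.Nonempty},
        Fintype {L // obP L (T \ S.1)} := fun S => Fintype.ofFinite _
    have e := obEquiv T hTne
    constructor
    · exact Finite.of_equiv _ e
    · rw [← Nat.card_congr e, Nat.card_eq_fintype_card, Fintype.card_sigma]
      have hc : ∀ S : {S : Finset (Fin n) // S ⊆ T ∧ S.Nonempty},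
          Fintype.card {L // obP L (T \ S.1)} = obb (m - S.1.card) := fun S => by
        rw [← Nat.card_eq_fintype_card]; exact (hfib S).2
      rw [Finset.sum_congr rfl fun S _ => hc S]
      classical
      have hsub : ∑ S : {S : Finset (Fin n) // S ⊆ T ∧ S.Nonempty}, obb (m - S.1.card)
          = ∑ S ∈ T.powerset, (if S.Nonempty then obb (m - S.card) else 0) := by
        rw [← Finset.sum_subtype (p := fun S : Finset (Fin n) => S ⊆ T ∧ S.Nonempty)
          (s := T.powerset.filter (·.Nonempty)) (by simp [and_comm])
          (f := fun S => obb (m - S.card)), Finset.sum_filter]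
      rw [hsub]
      have hpc : ∑ S ∈ T.powerset, (if S.Nonempty then obb (m - S.card) else 0)
          = ∑ k ∈ Finset.range (T.card + 1),
              T.card.choose k • (if k ≠ 0 then obb (m - k) else 0) := by
        rw [← Finset.sum_powerset_apply_card
          (f := fun k => if k ≠ 0 then obb (m - k) else 0)]
        refine Finset.sum_congr rfl fun S _ => ?_
        simp [Finset.nonempty_iff_ne_empty, Finset.card_eq_zero]
      rw [hpc, hT]
      obtain ⟨m', rfl⟩ := Nat.exists_eq_succ_of_ne_zero hm.ne'
      rw [Finset.sum_range_succ']
      have hb : obb (m' + 1) = ∑ k ∈ Finset.range (m' + 1),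
          (m' + 1).choose (k + 1) * obb (m' - k) := by rw [obb]
      rw [hb]
      simp [Nat.succ_sub_succ]

/-- The ordered Bell (Fubini) number: the number of ordered partitions of
`{1, …, n}` into a sequence of pairwise disjoint nonempty blocks covering
the whole set. -/
noncomputable def orderedBell (n : ℕ) : ℕ :=
  Nat.card {L : List (Finset (Fin n)) //
    L.Pairwise (fun S T => Disjoint S T) ∧ (∀ S ∈ L, S.Nonempty) ∧
    L.foldr (· ∪ ·) ∅ = Finset.univ}

private lemma orderedBell_eq (n : ℕ) : orderedBell n = obb n := by
  have := (ob_key (n := n) n Finset.univ (by simp)).2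
  exact this

private lemma obb_egf_term (k : ℕ) :
    ((obb (k + 1) : ℚ)) / (k + 1).factorial
      = ∑ i ∈ Finset.range (k + 1),
          (1 / ((i + 1).factorial : ℚ)) * ((obb (k - i) : ℚ) / (k - i).factorial) := by
  have hb : obb (k + 1) = ∑ i ∈ Finset.range (k + 1),
      (k + 1).choose (i + 1) * obb (k - i) := by rw [obb]
  rw [hb, Nat.cast_sum, Finset.sum_div]
  refine Finset.sum_congr rfl fun i hi => ?_
  have hle : i + 1 ≤ k + 1 := by
    have := Finset.mem_range.1 hi; omega
  rw [Nat.cast_mul, Nat.cast_choose ℚ hle]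
  have hki : (k + 1) - (i + 1) = k - i := by omega
  rw [hki]
  have h1 : (((i + 1).factorial : ℚ)) ≠ 0 := Nat.cast_ne_zero.2 (Nat.factorial_ne_zero _)
  have h2 : (((k - i).factorial : ℚ)) ≠ 0 := Nat.cast_ne_zero.2 (Nat.factorial_ne_zero _)
  have h3 : (((k + 1).factorial : ℚ)) ≠ 0 := Nat.cast_ne_zero.2 (Nat.factorial_ne_zero _)
  field_simp

theorem stmt_16 :
    PowerSeries.mk (fun n => (orderedBell n : ℚ) / n.factorial)
      = (2 - PowerSeries.exp ℚ)⁻¹ := by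
  have hA : PowerSeries.mk (fun n => (orderedBell n : ℚ) / n.factorial)
      = PowerSeries.mk (fun n => (obb n : ℚ) / n.factorial) := by
    ext m
    simp [orderedBell_eq]
  rw [hA, PowerSeries.eq_inv_iff_mul_eq_one (by simp [map_ofNat]; norm_num)]
  rw [mul_sub, mul_comm (PowerSeries.mk fun n => (obb n : ℚ) / n.factorial) (PowerSeries.exp ℚ),
    show (2 : PowerSeries ℚ) = PowerSeries.C 2 from (map_ofNat (PowerSeries.C (R := ℚ)) 2).symm]
  ext n
  rw [map_sub, PowerSeries.coeff_mul_C, PowerSeries.coeff_mul]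
  simp only [PowerSeries.coeff_mk, PowerSeries.coeff_exp, Algebra.algebraMap_self, RingHom.id_apply]
  cases n with
  | zero =>
    simp [obb]; norm_num
  | succ k =>
    rw [Finset.Nat.sum_antidiagonal_eq_sum_range_succ_mk, Finset.sum_range_succ']
    simp only [Nat.succ_sub_succ, Nat.factorial_zero, Nat.cast_one, Nat.sub_zero]
    rw [← obb_egf_term k]
    have hone : (PowerSeries.coeff (R := ℚ) (k + 1)) 1 = 0 := by
      simp [PowerSeries.coeff_one]
    rw [hone]
    ring
end

section
/- Let m ≥ n be positive integers with d = gcd(m, n), and suppose d divides r with 0 ≤ r ≤ m·n. Writing m' = m/d, n' = n/d, r' = r/d, p = ⌊r'/n'⌋, q = r' − n'·p, and letting a ∈ {0,…,m'−1}, b ∈ {0,…,n'−1} be such that q = a·n' − b·m', the pair (p + a, b) is the integer solution (x, y) of n·x − m·y = r with x ≥ 0 and minimal nonnegative y. -/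
theorem stmt_17 (m n r : ℤ) (hm : 0 < m) (hn : 0 < n) (hmn : n ≤ m)
    (d : ℤ) (hd : d = Int.gcd m n) (hdr : d ∣ r) (hr0 : 0 ≤ r) (hr1 : r ≤ m * n)
    (m' n' r' p q a b : ℤ)
    (hm' : m' = m / d) (hn' : n' = n / d) (hr' : r' = r / d)
    (hp : p = r' / n') (hq : q = r' - n' * p)
    (ha0 : 0 ≤ a) (ha1 : a < m') (hb0 : 0 ≤ b) (hb1 : b < n')
    (hab : q = a * n' - b * m') :
    n * (p + a) - m * b = r ∧ 0 ≤ p + a ∧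
      ∀ x y : ℤ, n * x - m * y = r → 0 ≤ y → b ≤ y := by
  have hd0 : 0 < d := by
    rw [hd]
    exact_mod_cast Int.gcd_pos_of_ne_zero_left n hm.ne'
  have hdm : d ∣ m := hd ▸ Int.gcd_dvd_left m n
  have hdn : d ∣ n := hd ▸ Int.gcd_dvd_right m n
  have hmm : d * m' = m := by rw [hm']; exact Int.mul_ediv_cancel' hdm
  have hnn : d * n' = n := by rw [hn']; exact Int.mul_ediv_cancel' hdn
  have hrr : d * r' = r := by rw [hr']; exact Int.mul_ediv_cancel' hdr
  have hn'0 : 0 < n' := by nlinarith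
  have hcop : IsCoprime m' n' := by
    rw [Int.isCoprime_iff_gcd_eq_one, hm', hn', hd]
    exact Int.gcd_div_gcd_div_gcd (by exact_mod_cast hd0.trans_eq hd)
  have hmain : n * (p + a) - m * b = r := by
    calc n * (p + a) - m * b = d * n' * (p + a) - d * m' * b := by rw [hmm, hnn]
    _ = d * (n' * p + (a * n' - b * m')) := by ring
    _ = d * r' := by rw [← hab]; congr 1; linarith
    _ = r := hrr
  refine ⟨hmain, ?_, ?_⟩
  · have hr'0 : 0 ≤ r' := by rw [hr']; exact Int.ediv_nonneg hr0 hd0.le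
    have hp0 : 0 ≤ p := by rw [hp]; exact Int.ediv_nonneg hr'0 hn'0.le
    linarith
  · intro x y hxy hy
    have key : d * (n' * (x - (p + a))) = d * (m' * (y - b)) := by
      have h1 : n * x - m * y = n * (p + a) - m * b := by rw [hxy, hmain]
      rw [← hmm, ← hnn] at h1
      linear_combination h1
    have key2 : n' * (x - (p + a)) = m' * (y - b) :=
      mul_left_cancel₀ hd0.ne' key
    have hdvd : n' ∣ y - b := by
      have : n' ∣ m' * (y - b) := ⟨x - (p + a), key2.symm⟩
      exact hcop.symm.dvd_of_dvd_mul_left this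
    by_contra hlt
    push_neg at hlt
    have hdvd' : n' ∣ b - y := by
      rw [show b - y = -(y - b) by ring]; exact dvd_neg.mpr hdvd
    have := Int.le_of_dvd (by linarith) hdvd'
    linarith
end
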